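/- arXiv:0804.1299 — 10 statements merged into one kernel-verified Lean document; each statement's English description precedes it below -/
import Mathlib

section
/- For every integer n ≥ 3 and every integer m ≥ 2, the trivial upper bound n^m is not attained: I(n,m) < n^m. Equivalently, for n ≥ 3 and m ≥ 2 there exist two points of (ℤ/nℤ)^m that are not at integral distance. -/
/-- Two points `u, v ∈ (ℤ/nℤ)^m` are at integral distance if there exists
`d ∈ ℤ/nℤ` with `∑ i, (u i - v i)^2 = d^2`. -/
def IntegralDistance (n : ℕ) {m : ℕ} (u v : Fin m → ZMod n) : Prop :=
  ∃ d : ZMod n, ∑ i, (u i - v i) ^ 2 = d ^ 2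

/-- `maxIntegralCard n m` is the maximum cardinality of a subset of `(ℤ/nℤ)^m`
whose points are pairwise at integral distance. -/
noncomputable def maxIntegralCard (n m : ℕ) : ℕ :=
  sSup {k : ℕ | ∃ S : Finset (Fin m → ZMod n),
    (∀ u ∈ S, ∀ v ∈ S, IntegralDistance n u v) ∧ S.card = k}

/-!
Since `(-1)² = 1²` and `-1 ≠ 1` in `ℤ/nℤ` for `n ≥ 3`, squaring on the finite set `ℤ/nℤ` is
not injective, hence not surjective. Walking up `0, 1, 2, …` from the square `0` we therefore
meet a square `s = d²` such that `s + 1` is not a square. The point `(d, 1, 0, …, 0)` then has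
non-square squared distance `d² + 1` from the origin, so `(ℤ/nℤ)^m` itself is not an integral set.
-/

theorem exists_not_isSquare_of_neg_one_ne_one {R : Type*} [Monoid R] [HasDistribNeg R] [Finite R]
    (h : (-1 : R) ≠ 1) : ∃ c : R, ¬ IsSquare c := by
  by_contra! hsq
  have hsurj : Function.Surjective (fun r : R => r * r) := fun c => (hsq c).imp fun r hr => hr.symm
  exact h (Finite.injective_iff_surjective.mpr hsurj (by simp))

theorem exists_isSquare_and_not_isSquare_add_one {R : Type*} [NonAssocSemiring R]
    (h : ∃ k : ℕ, ¬ IsSquare (k : R)) : ∃ s : R, IsSquare s ∧ ¬ IsSquare (s + 1) := by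
  by_contra! hstep
  obtain ⟨k, hk⟩ := h
  refine hk (Nat.rec ?_ (fun j hj => ?_) k)
  · exact ⟨0, by simp⟩
  · simpa using hstep _ hj

theorem sum_sq_single_add_single {R : Type*} [CommSemiring R] {ι : Type*} [Fintype ι]
    [DecidableEq ι] {i j : ι} (hij : i ≠ j) (a b : R) :
    ∑ x, (Pi.single i a + Pi.single j b : ι → R) x ^ 2 = a ^ 2 + b ^ 2 := by
  rw [Fintype.sum_eq_add i j hij fun x hx => by simp [hx.1, hx.2]]
  simp [hij, hij.symm]

theorem ZMod.exists_not_isSquare_sq_add_one {n : ℕ} (hn : 3 ≤ n) :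
    ∃ d : ZMod n, ¬ IsSquare (d ^ 2 + 1) := by
  have : NeZero n := ⟨by omega⟩
  have : Fact (2 < n) := ⟨hn⟩
  obtain ⟨c, hc⟩ := exists_not_isSquare_of_neg_one_ne_one (R := ZMod n) ZMod.neg_one_ne_one
  obtain ⟨k, rfl⟩ := ZMod.natCast_zmod_surjective c
  obtain ⟨s, ⟨d, rfl⟩, hs⟩ := exists_isSquare_and_not_isSquare_add_one ⟨k, hc⟩
  exact ⟨d, by rwa [sq]⟩

theorem not_integralDistance_single_add_single_zero {n m : ℕ} {i j : Fin m} (hij : i ≠ j)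
    {d : ZMod n} (hd : ¬ IsSquare (d ^ 2 + 1)) :
    ¬ IntegralDistance n (Pi.single i d + Pi.single j 1) 0 := by
  rintro ⟨e, he⟩
  simp only [Pi.zero_apply, sub_zero, sum_sq_single_add_single hij, one_pow] at he
  exact hd ⟨e, by rw [he, sq]⟩

theorem maxIntegralCard_lt_pow_of_not_integralDistance {n m : ℕ} [NeZero n]
    {u v : Fin m → ZMod n} (h : ¬ IntegralDistance n u v) : maxIntegralCard n m < n ^ m := by
  set sizes := {k : ℕ | ∃ S : Finset (Fin m → ZMod n),
    (∀ u ∈ S, ∀ v ∈ S, IntegralDistance n u v) ∧ S.card = k}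
  have hbdd : BddAbove sizes := by
    refine ⟨n ^ m, ?_⟩
    rintro _ ⟨S, -, rfl⟩
    simpa [ZMod.card] using S.card_le_univ
  obtain ⟨S, hS, hcard⟩ := Nat.sSup_mem (s := sizes) ⟨0, ∅, by simp⟩ hbdd
  have hS_ne : S ≠ Finset.univ := fun hS_univ =>
    h (hS u (hS_univ ▸ Finset.mem_univ u) v (hS_univ ▸ Finset.mem_univ v))
  rw [maxIntegralCard, ← hcard]
  simpa [ZMod.card] using Finset.card_lt_card (Finset.ssubset_univ_iff.mpr hS_ne)

theorem maxIntegralCard_lt_pow (n m : ℕ) (hn : 3 ≤ n) (hm : 2 ≤ m) :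
    maxIntegralCard n m < n ^ m ∧
      ∃ u v : Fin m → ZMod n, ¬ IntegralDistance n u v := by
  have : NeZero n := ⟨by omega⟩
  obtain ⟨d, hd⟩ := ZMod.exists_not_isSquare_sq_add_one hn
  have hbad := not_integralDistance_single_add_single_zero
    (i := ⟨0, by omega⟩) (j := ⟨1, hm⟩) (by simp [Fin.ext_iff]) hd
  exact ⟨maxIntegralCard_lt_pow_of_not_integralDistance hbad, _, _, hbad⟩
end

section
/- For every positive integer m and all points u,v ∈ (ℤ/3ℤ)^m, the points u and v are at integral distance if and only if their Hamming distance h(u,v) (the number of coordinates i with u_i ≠ v_i) is not congruent to 2 modulo 3. -/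
/-! Every nonzero element of `ℤ/3ℤ` squares to `1`, so the squared distance of two points is
their Hamming distance read modulo `3`; and the squares of `ℤ/3ℤ` are exactly `0` and `1`. -/

namespace ZMod

theorem sq_eq_ite_of_three (x : ZMod 3) : x ^ 2 = if x = 0 then 0 else 1 := by
  revert x
  decide

theorem exists_sq_eq_natCast_three_iff (k : ℕ) :
    (∃ d : ZMod 3, (k : ZMod 3) = d ^ 2) ↔ k % 3 ≠ 2 := by
  rw [← natCast_mod k 3]
  have hk : k % 3 < 3 := Nat.mod_lt k three_pos
  generalize k % 3 = r at hk ⊢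
  interval_cases r <;> decide

theorem sum_sq_sub_eq_hammingDist_of_three {ι : Type*} [Fintype ι] (u v : ι → ZMod 3) :
    ∑ i, (u i - v i) ^ 2 = (hammingDist u v : ZMod 3) := by
  rw [hammingDist, Finset.card_filter, Nat.cast_sum]
  refine Finset.sum_congr rfl fun i _ => ?_
  simp only [sq_eq_ite_of_three, sub_eq_zero, Nat.cast_ite, Nat.cast_one, Nat.cast_zero]
  split_ifs <;> simp_all

end ZMod

theorem integralDistance_iff_hammingDist_mod_three_general (m : ℕ)
    (u v : Fin m → ZMod 3) :
    IntegralDistance 3 u v ↔ hammingDist u v % 3 ≠ 2 := by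
  rw [IntegralDistance, ZMod.sum_sq_sub_eq_hammingDist_of_three,
    ZMod.exists_sq_eq_natCast_three_iff]

theorem integralDistance_iff_hammingDist_mod_three (m : ℕ) (hm : 0 < m)
    (u v : Fin m → ZMod 3) :
    IntegralDistance 3 u v ↔ hammingDist u v % 3 ≠ 2 :=
  integralDistance_iff_hammingDist_mod_three_general m u v
end

section
/- For all positive integers n and m, the number 2^m divides I(2n,m), where I(2n,m) is the maximum cardinality of a subset of (ℤ/2nℤ)^m whose points are pairwise at integral distance. -/
/-!
In `(ℤ/2nℤ)^m` the subgroup `H = {0, n}^m` has order `2^m` and is killed by `2`. If `2 r = 0`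
then `∑ (a_i + r_i)^2 = ∑ a_i^2 + (∑ r_i)^2` and `d^2 + s^2 = (d + s)^2` for `2 s = 0`, so
translating the two points of an integral pair by elements of `H` keeps them at integral distance.
Hence `S + H` is an integral point set whenever `S` is; for `S` of maximum size this forces
`S = S + H`, a union of cosets of `H`.
-/

open Pointwise

theorem sq_sum_of_two_mul_eq_zero {ι R : Type*} [CommRing R] (s : Finset ι) {t : ι → R}
    (ht : ∀ i ∈ s, 2 * t i = 0) : (∑ i ∈ s, t i) ^ 2 = ∑ i ∈ s, t i ^ 2 := by
  classical
  induction s using Finset.induction_on with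
  | empty => simp
  | insert a s ha ih =>
    rw [Finset.sum_insert ha, Finset.sum_insert ha,
      ← ih fun i hi => ht i (Finset.mem_insert_of_mem hi)]
    linear_combination (∑ i ∈ s, t i) * ht a (Finset.mem_insert_self a s)

theorem AddSubgroup.card_dvd_card_add {G : Type*} [AddGroup G] (H : AddSubgroup G) (s : Set G) :
    Nat.card H ∣ Nat.card ↑(s + (H : Set G)) := by
  rw [← QuotientAddGroup.preimage_image_mk_eq_add,
    Nat.card_congr (QuotientAddGroup.preimageMkEquivAddSubgroupProdSet _ _), Nat.card_prod]
  exact dvd_mul_right _ _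

def halfCube (n m : ℕ) : AddSubgroup (Fin m → ZMod (2 * n)) :=
  AddSubgroup.pi Set.univ fun _ => AddSubgroup.zmultiples (n : ZMod (2 * n))

theorem ZMod.addOrderOf_natCast_two_mul {n : ℕ} (hn : n ≠ 0) :
    addOrderOf (n : ZMod (2 * n)) = 2 := by
  rw [ZMod.addOrderOf_coe _ (by omega), Nat.gcd_mul_left_left, Nat.mul_div_cancel _ (by omega)]

theorem card_halfCube {n : ℕ} (hn : n ≠ 0) (m : ℕ) : Nat.card (halfCube n m) = 2 ^ m := by
  rw [halfCube, ← SetLike.coe_sort_coe, AddSubgroup.coe_pi, Nat.card_congr (Equiv.Set.univPi _),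
    Nat.card_pi]
  simp [Nat.card_zmultiples, ZMod.addOrderOf_natCast_two_mul hn]

theorem two_nsmul_eq_zero_of_mem_halfCube {n m : ℕ} {t : Fin m → ZMod (2 * n)}
    (ht : t ∈ halfCube n m) : 2 • t = 0 := by
  funext i
  obtain ⟨k, hk⟩ := AddSubgroup.mem_zmultiples_iff.mp (ht i (Set.mem_univ i))
  rw [Pi.smul_apply, ← hk, smul_comm, nsmul_eq_mul, ← Nat.cast_two, ← Nat.cast_mul,
    ZMod.natCast_self, smul_zero, Pi.zero_apply]

theorem IntegralDistance.of_two_nsmul_sub_sub_eq_zero {n m : ℕ} {u v x y : Fin m → ZMod n}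
    (h : IntegralDistance n u v) (hr : 2 • ((x - y) - (u - v)) = 0) :
    IntegralDistance n x y := by
  obtain ⟨d, hd⟩ := h
  set r := (x - y) - (u - v) with hr_def
  have hr2 : ∀ i, 2 * r i = 0 := fun i => by simpa [two_nsmul, two_mul] using congrFun hr i
  have hsum : 2 * ∑ i, r i = 0 := by simp [Finset.mul_sum, hr2]
  refine ⟨d + ∑ i, r i, ?_⟩
  calc ∑ i, (x i - y i) ^ 2 = ∑ i, ((u i - v i) ^ 2 + r i ^ 2) :=
        Finset.sum_congr rfl fun i _ => by
          rw [show x i - y i = (u i - v i) + r i by simp [hr_def]]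
          linear_combination (u i - v i) * hr2 i
    _ = d ^ 2 + (∑ i, r i) ^ 2 := by
        rw [Finset.sum_add_distrib, hd, sq_sum_of_two_mul_eq_zero _ fun i _ => hr2 i]
    _ = (d + ∑ i, r i) ^ 2 := by linear_combination (-d) * hsum

def IsIntegralPointSet (n : ℕ) {m : ℕ} (S : Set (Fin m → ZMod n)) : Prop :=
  ∀ u ∈ S, ∀ v ∈ S, IntegralDistance n u v

theorem IsIntegralPointSet.add_addSubgroup {n m : ℕ} {S : Set (Fin m → ZMod n)}
    {H : AddSubgroup (Fin m → ZMod n)} (hS : IsIntegralPointSet n S)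
    (hH : ∀ h ∈ H, 2 • h = 0) : IsIntegralPointSet n (S + (H : Set (Fin m → ZMod n))) := by
  rintro _ ⟨u, hu, a, ha, rfl⟩ _ ⟨v, hv, b, hb, rfl⟩
  refine (hS u hu v hv).of_two_nsmul_sub_sub_eq_zero ?_
  rw [show u + a - (v + b) - (u - v) = a - b by abel]
  exact hH _ (H.sub_mem ha hb)

section MaxIntegralCard

def integralPointSetCards (n m : ℕ) : Set ℕ :=
  {k | ∃ S : Finset (Fin m → ZMod n), IsIntegralPointSet n (S : Set (Fin m → ZMod n)) ∧
    S.card = k}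

variable {n m : ℕ} [NeZero n]

theorem bddAbove_integralPointSetCards : BddAbove (integralPointSetCards n m) :=
  ⟨Fintype.card (Fin m → ZMod n), by rintro _ ⟨S, -, rfl⟩; exact S.card_le_univ⟩

theorem exists_isIntegralPointSet_card_eq_maxIntegralCard :
    ∃ S : Finset (Fin m → ZMod n), IsIntegralPointSet n (S : Set (Fin m → ZMod n)) ∧
      S.card = maxIntegralCard n m :=
  Nat.sSup_mem (s := integralPointSetCards n m) ⟨0, ∅, by simp [IsIntegralPointSet], rfl⟩
    bddAbove_integralPointSetCards

theorem IsIntegralPointSet.card_le_maxIntegralCard {S : Set (Fin m → ZMod n)}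
    (hS : IsIntegralPointSet n S) : Nat.card S ≤ maxIntegralCard n m := by
  classical
  refine le_csSup bddAbove_integralPointSetCards
    ⟨S.toFinset, ?_, (Nat.card_eq_card_toFinset S).symm⟩
  simpa [IsIntegralPointSet] using hS

end MaxIntegralCard

theorem pow_two_dvd_maxIntegralCard_general (n m : ℕ) (hn : 0 < n) :
    2 ^ m ∣ maxIntegralCard (2 * n) m := by
  have : NeZero (2 * n) := ⟨by omega⟩
  obtain ⟨S, hS, hcard⟩ :=
    exists_isIntegralPointSet_card_eq_maxIntegralCard (n := 2 * n) (m := m)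
  set T : Set (Fin m → ZMod (2 * n)) := S + (halfCube n m : Set (Fin m → ZMod (2 * n)))
  have hT : IsIntegralPointSet (2 * n) T :=
    hS.add_addSubgroup fun _ => two_nsmul_eq_zero_of_mem_halfCube
  have hST : maxIntegralCard (2 * n) m ≤ Nat.card T := by
    rw [← hcard, ← Nat.card_eq_finsetCard]
    exact Nat.card_mono (Set.toFinite T) (Set.subset_add_left _ (halfCube n m).zero_mem)
  rw [← card_halfCube hn.ne' m, ← le_antisymm hT.card_le_maxIntegralCard hST]
  exact AddSubgroup.card_dvd_card_add _ _

theorem pow_two_dvd_maxIntegralCard (n m : ℕ) (hn : 0 < n) (hm : 0 < m) :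
    2 ^ m ∣ maxIntegralCard (2 * n) m :=
  pow_two_dvd_maxIntegralCard_general n m hn
end

section
/- Let n be a positive integer with prime factorization n = ∏_{i=1}^s p_i^{r_i} (pairwise distinct primes p_i), and let s(n) = ∏_{i=1}^s p_i^{⌊r_i/2⌋} (equivalently, s(n) is the largest positive integer whose square divides n). Then I(n,2) ≥ n · s(n); concretely, with k = ∏_{i=1}^s p_i^{⌈r_i/2⌉}, the set {(u, v·k) : u, v ∈ ℤ/nℤ} ⊆ (ℤ/nℤ)² has pairwise integral distances and cardinality n · s(n). -/
theorem ncard_le_maxIntegralCard {n m : ℕ} [NeZero n] {S : Set (Fin m → ZMod n)}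
    (hS : ∀ u ∈ S, ∀ v ∈ S, IntegralDistance n u v) : S.ncard ≤ maxIntegralCard n m := by
  refine le_csSup ⟨Fintype.card (Fin m → ZMod n), ?_⟩
    ⟨S.toFinite.toFinset, by simpa using hS, (Set.ncard_eq_toFinset_card S).symm⟩
  rintro _ ⟨T, -, rfl⟩
  exact T.card_le_univ

def scaledGrid (n : ℕ) (c : ZMod n) : Set (Fin 2 → ZMod n) :=
  {p | ∃ x y : ZMod n, p = ![x, y * c]}

theorem integralDistance_of_mem_scaledGrid {n : ℕ} {c : ZMod n} (hc : c ^ 2 = 0)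
    {u v : Fin 2 → ZMod n} (hu : u ∈ scaledGrid n c) (hv : v ∈ scaledGrid n c) :
    IntegralDistance n u v := by
  obtain ⟨x₁, y₁, rfl⟩ := hu
  obtain ⟨x₂, y₂, rfl⟩ := hv
  refine ⟨x₁ - x₂, ?_⟩
  simp only [Fin.sum_univ_two, Matrix.cons_val_zero, Matrix.cons_val_one]
  linear_combination (y₁ - y₂) ^ 2 * hc

theorem scaledGrid_eq_image (n : ℕ) (c : ZMod n) :
    scaledGrid n c =
      (piFinTwoEquiv fun _ => ZMod n).symm '' (Set.univ ×ˢ Set.range fun y => y * c) := by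
  ext p
  simp [scaledGrid, eq_comm]

theorem ZMod.range_mul_natCast_eq_zmultiples (n k : ℕ) :
    (Set.range fun y : ZMod n => y * k) = AddSubgroup.zmultiples (k : ZMod n) := by
  ext z
  simp only [Set.mem_range, SetLike.mem_coe, AddSubgroup.mem_zmultiples_iff, zsmul_eq_mul]
  exact ⟨fun ⟨y, hy⟩ => ⟨y.cast, by simpa using hy⟩, fun ⟨m, hm⟩ => ⟨m, hm⟩⟩

theorem ZMod.ncard_range_mul_natCast {n s k : ℕ} [NeZero n] (hk : s * k = n) :
    (Set.range fun y : ZMod n => y * k).ncard = s := by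
  have hk0 : k ≠ 0 := by rintro rfl; exact NeZero.ne n (by simp [← hk])
  rw [ZMod.range_mul_natCast_eq_zmultiples, ← Nat.card_coe_set_eq, SetLike.coe_sort_coe,
    Nat.card_zmultiples, ZMod.addOrderOf_coe' n hk0, ← hk, Nat.gcd_mul_left_left,
    Nat.mul_div_cancel _ (Nat.pos_of_ne_zero hk0)]

theorem ncard_scaledGrid_natCast {n s k : ℕ} [NeZero n] (hk : s * k = n) :
    (scaledGrid n k).ncard = n * s := by
  rw [scaledGrid_eq_image, Set.ncard_image_of_injective _ (Equiv.injective _), Set.ncard_prod,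
    Set.ncard_univ, Nat.card_zmod, ZMod.ncard_range_mul_natCast hk]

theorem ZMod.natCast_sq_eq_zero_of_dvd {n s k : ℕ} (hsk : s ∣ k) (hk : s * k = n) :
    (k : ZMod n) ^ 2 = 0 := by
  rw [← Nat.cast_pow, ZMod.natCast_eq_zero_iff, ← hk, sq]
  exact Nat.mul_dvd_mul_right hsk k

theorem maxIntegralCard_lower_bound_general (n s k : ℕ) (hn : 0 < n)
    (hs : s ^ 2 ∣ n) (hk : s * k = n) :
    (∀ u ∈ {p : Fin 2 → ZMod n | ∃ x y : ZMod n, p = ![x, y * (k : ZMod n)]},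
      ∀ v ∈ {p : Fin 2 → ZMod n | ∃ x y : ZMod n, p = ![x, y * (k : ZMod n)]},
        IntegralDistance n u v) ∧
    {p : Fin 2 → ZMod n | ∃ x y : ZMod n, p = ![x, y * (k : ZMod n)]}.ncard = n * s ∧
    n * s ≤ maxIntegralCard n 2 := by
  have : NeZero n := ⟨hn.ne'⟩
  have hs0 : 0 < s := Nat.pos_of_ne_zero <| by rintro rfl; omega
  have hsk : s ∣ k := Nat.dvd_of_mul_dvd_mul_left hs0 (by rwa [← sq, hk])
  have hgrid : ∀ u ∈ scaledGrid n k, ∀ v ∈ scaledGrid n k, IntegralDistance n u v :=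
    fun _ hu _ hv =>
      integralDistance_of_mem_scaledGrid (ZMod.natCast_sq_eq_zero_of_dvd hsk hk) hu hv
  have hcard := ncard_scaledGrid_natCast hk
  exact ⟨hgrid, hcard, hcard ▸ ncard_le_maxIntegralCard hgrid⟩

theorem maxIntegralCard_lower_bound (n s k : ℕ) (hn : 0 < n)
    (hs : s ^ 2 ∣ n) (hmax : ∀ t : ℕ, 0 < t → t ^ 2 ∣ n → t ≤ s)
    (hk : s * k = n) :
    (∀ u ∈ {p : Fin 2 → ZMod n | ∃ x y : ZMod n, p = ![x, y * (k : ZMod n)]},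
      ∀ v ∈ {p : Fin 2 → ZMod n | ∃ x y : ZMod n, p = ![x, y * (k : ZMod n)]},
        IntegralDistance n u v) ∧
    {p : Fin 2 → ZMod n | ∃ x y : ZMod n, p = ![x, y * (k : ZMod n)]}.ncard = n * s ∧
    n * s ≤ maxIntegralCard n 2 :=
  maxIntegralCard_lower_bound_general n s k hn hs hk
end

section
/- Let n ≡ 2 (mod 4) be a positive integer with prime factorization n = 2 · ∏_{i=2}^s p_i^{r_i} (pairwise distinct odd primes p_i), and let s(n) = ∏_{i=2}^s p_i^{⌊r_i/2⌋} (equivalently, s(n) is the largest positive integer whose square divides n). Then I(n,2) ≥ 2n · s(n); concretely, with k = ∏_{i=2}^s p_i^{⌈r_i/2⌉}, the set {(u, v·k) : u, v ∈ ℤ/nℤ} ⊆ (ℤ/nℤ)² has pairwise integral distances and cardinality 2n · s(n). -/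
/-! Write `n = 2h` with `h = s k`, which is odd since `n ≡ 2 (mod 4)`. In `ℤ/2hℤ` the element `h`
satisfies `2h = 0` and `h² = h`, and `c² h = c h` for every `c` because `c² - c` is even; hence
`(a + e h)² = a² + e h`, i.e. every element of `a² + h·(ℤ/nℤ)` is a square. As `s` is odd and
`s² ∣ 2sk`, `s ∣ k`, so `h ∣ k²` and the squared distance `(Δx)² + (Δy)² k²` of two points
`(x, y k)` lies in `(Δx)² + h·(ℤ/nℤ)`. The multiples of `k` form a subgroup of order `n / k = 2s`,
so there are `n · 2s` such points. -/

theorem dvd_of_sq_dvd_two_mul_mul {s k : ℕ} (hs_odd : Odd s) (hs : s ^ 2 ∣ 2 * (s * k)) :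
    s ∣ k := by
  have hs_dvd : s ∣ 2 * k :=
    Nat.dvd_of_mul_dvd_mul_left hs_odd.pos (by rwa [sq, mul_left_comm] at hs)
  exact (Nat.coprime_two_left.mpr hs_odd).symm.dvd_of_dvd_mul_left hs_dvd

namespace ZMod

theorem sq_mul_eq_mul_of_two_mul_eq_zero {n : ℕ} {x : ZMod n} (hx : 2 * x = 0) (c : ZMod n) :
    c ^ 2 * x = c * x := by
  obtain ⟨m, rfl⟩ := intCast_surjective c
  obtain ⟨r, hr⟩ := Int.even_mul_pred_self m
  have hr' := congrArg (Int.cast : ℤ → ZMod n) hr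
  push_cast at hr'
  linear_combination x * hr' + r * hx

theorem two_mul_natCast_eq_zero (h : ℕ) : (2 : ZMod (2 * h)) * h = 0 := by
  exact_mod_cast natCast_self (2 * h)

theorem natCast_sq_eq_self_of_odd {h : ℕ} (hh : Odd h) : (h : ZMod (2 * h)) ^ 2 = h := by
  obtain ⟨q, hq⟩ := hh
  have hsq := congrArg (Nat.cast : ℕ → ZMod (2 * h))
    (show h ^ 2 = h + q * (2 * h) by rw [hq]; ring)
  push_cast at hsq
  linear_combination hsq + q * two_mul_natCast_eq_zero h

theorem add_mul_half_sq {h : ℕ} (hh : Odd h) (a e : ZMod (2 * h)) :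
    (a + e * h) ^ 2 = a ^ 2 + e * h := by
  have h2 := two_mul_natCast_eq_zero h
  linear_combination a * e * h2 + e ^ 2 * natCast_sq_eq_self_of_odd hh +
    sq_mul_eq_mul_of_two_mul_eq_zero h2 e

theorem range_mul_right_eq_zmultiples {n : ℕ} (k : ZMod n) :
    Set.range (· * k) = (AddSubgroup.zmultiples k : Set (ZMod n)) := by
  ext z
  constructor
  · rintro ⟨y, rfl⟩
    obtain ⟨m, rfl⟩ := intCast_surjective y
    exact ⟨m, by simp [zsmul_eq_mul]⟩
  · rintro ⟨m, rfl⟩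
    exact ⟨m, by simp [zsmul_eq_mul]⟩

theorem ncard_range_mul_natCast_s7 {n k : ℕ} [NeZero n] (hk : k ∣ n) :
    (Set.range (· * (k : ZMod n))).ncard = n / k := by
  rw [range_mul_right_eq_zmultiples, ← Nat.card_coe_set_eq, SetLike.coe_sort_coe,
    Nat.card_zmultiples, addOrderOf_coe k (NeZero.ne n), Nat.gcd_eq_right hk]

end ZMod

theorem ncard_setOf_eq_vec_mul_natCast {n k : ℕ} [NeZero n] (hk : k ∣ n) :
    {p : Fin 2 → ZMod n | ∃ x y : ZMod n, p = ![x, y * (k : ZMod n)]}.ncard = n * (n / k) := by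
  have himage : {p : Fin 2 → ZMod n | ∃ x y : ZMod n, p = ![x, y * (k : ZMod n)]} =
      (finTwoArrowEquiv (ZMod n)).symm '' (Set.univ ×ˢ Set.range (· * (k : ZMod n))) := by
    ext p
    simp [finTwoArrowEquiv, eq_comm]
  rw [himage, Set.ncard_image_of_injective _ (Equiv.injective _), Set.ncard_prod,
    Set.ncard_univ, Nat.card_zmod, ZMod.ncard_range_mul_natCast_s7 hk]

theorem integralDistance_vec_mul_of_dvd_sq {h k : ℕ} (hh : Odd h) (hk : h ∣ k ^ 2)
    (x₁ y₁ x₂ y₂ : ZMod (2 * h)) :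
    IntegralDistance (2 * h) ![x₁, y₁ * k] ![x₂, y₂ * k] := by
  obtain ⟨j, hj⟩ := hk
  have hk2 := congrArg (Nat.cast : ℕ → ZMod (2 * h)) hj
  push_cast at hk2
  refine ⟨x₁ - x₂ + (y₁ - y₂) ^ 2 * j * h, ?_⟩
  rw [ZMod.add_mul_half_sq hh, Fin.sum_univ_two]
  simp only [Matrix.cons_val_zero, Matrix.cons_val_one]
  linear_combination (y₁ - y₂) ^ 2 * hk2

theorem maxIntegralCard_lower_bound_two_mod_four_general (n s k : ℕ)
    (hn4 : n % 4 = 2)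
    (hs : s ^ 2 ∣ n)
    (hk : 2 * (s * k) = n) :
    (∀ u ∈ {p : Fin 2 → ZMod n | ∃ x y : ZMod n, p = ![x, y * (k : ZMod n)]},
      ∀ v ∈ {p : Fin 2 → ZMod n | ∃ x y : ZMod n, p = ![x, y * (k : ZMod n)]},
        IntegralDistance n u v) ∧
    {p : Fin 2 → ZMod n | ∃ x y : ZMod n, p = ![x, y * (k : ZMod n)]}.ncard = 2 * n * s ∧
    2 * n * s ≤ maxIntegralCard n 2 := by
  subst hk
  have hodd : Odd (s * k) := Nat.odd_iff.mpr (by omega)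
  obtain ⟨hs_odd, hk_odd⟩ := Nat.odd_mul.mp hodd
  have : NeZero (2 * (s * k)) := ⟨by omega⟩
  have hsk : s ∣ k := dvd_of_sq_dvd_two_mul_mul hs_odd hs
  set S : Set (Fin 2 → ZMod (2 * (s * k))) := {p | ∃ x y, p = ![x, y * (k : ZMod _)]}
  have hpair : ∀ u ∈ S, ∀ v ∈ S, IntegralDistance _ u v := by
    rintro _ ⟨x₁, y₁, rfl⟩ _ ⟨x₂, y₂, rfl⟩
    exact integralDistance_vec_mul_of_dvd_sq hodd (by rw [sq]; exact mul_dvd_mul_right hsk k)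
      x₁ y₁ x₂ y₂
  have hcard : S.ncard = 2 * (2 * (s * k)) * s := by
    rw [ncard_setOf_eq_vec_mul_natCast ⟨2 * s, by ring⟩, show 2 * (s * k) = 2 * s * k by ring,
      Nat.mul_div_cancel _ hk_odd.pos]
    ring
  exact ⟨hpair, hcard, hcard ▸ ncard_le_maxIntegralCard hpair⟩

theorem maxIntegralCard_lower_bound_two_mod_four (n s k : ℕ) (hn : 0 < n)
    (hn4 : n % 4 = 2)
    (hs : s ^ 2 ∣ n) (hmax : ∀ t : ℕ, 0 < t → t ^ 2 ∣ n → t ≤ s)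
    (hk : 2 * (s * k) = n) :
    (∀ u ∈ {p : Fin 2 → ZMod n | ∃ x y : ZMod n, p = ![x, y * (k : ZMod n)]},
      ∀ v ∈ {p : Fin 2 → ZMod n | ∃ x y : ZMod n, p = ![x, y * (k : ZMod n)]},
        IntegralDistance n u v) ∧
    {p : Fin 2 → ZMod n | ∃ x y : ZMod n, p = ![x, y * (k : ZMod n)]}.ncard = 2 * n * s ∧
    2 * n * s ≤ maxIntegralCard n 2 :=
  maxIntegralCard_lower_bound_two_mod_four_general n s k hn4 hs hk
end

section
/- For every prime p ≥ 3, I(p²,2) = p³; that is, the maximum cardinality of a subset of (ℤ/p²ℤ)² whose points are pairwise at integral distance equals p³. -/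
/-!
For the lower bound, the `p³` points whose second coordinate is divisible by `p` are pairwise at
integral distance, because the square of a multiple of `p` vanishes in `ℤ/p²ℤ`.

For the upper bound, let `S` be a set of points pairwise at integral distance. If `p ≡ 3 (mod 4)`,
the form `x² + y²` is anisotropic over `𝔽_p`. The residues of `S` form a set `T ⊆ 𝔽_p²` whose
differences have square norm; for the multiplication `A` by some `a + b i` of non-square norm,
the map `(r, s) ↦ r + A s` is injective on `T × T`, so `|T| ≤ p`, and each residue class holds `p²` points.
If `p ≡ 1 (mod 4)`, `-1` has a square root `I` mod `p²`, and in the coordinates `u₀ ± I u₁` the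
squared distance becomes a product `(a - a')(b - b')`. A square that vanishes mod `p` vanishes
mod `p²`, so within a class `b ≡ β (mod p)` two points whose `a` differ mod `p` have the same `b`;
hence each of the `p` classes holds at most `p²` points.
-/

open Finset

lemma integralDistance_iff_isSquare {n m : ℕ} (u v : Fin m → ZMod n) :
    IntegralDistance n u v ↔ IsSquare (∑ i, (u i - v i) ^ 2) := by
  simp only [IntegralDistance, IsSquare, sq]

lemma maxIntegralCard_eq {n m N : ℕ}
    (hle : ∀ S : Finset (Fin m → ZMod n), (∀ u ∈ S, ∀ v ∈ S, IntegralDistance n u v) → #S ≤ N)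
    (hex : ∃ S : Finset (Fin m → ZMod n), (∀ u ∈ S, ∀ v ∈ S, IntegralDistance n u v) ∧ #S = N) :
    maxIntegralCard n m = N :=
  IsGreatest.csSup_eq ⟨hex, by rintro _ ⟨S, hS, rfl⟩; exact hle S hS⟩

section AnisotropicPlane

variable {K : Type*} [Field K]

lemma eq_zero_of_sum_sq_eq_zero (hK : ¬IsSquare (-1 : K)) {v : Fin 2 → K}
    (hv : ∑ i, v i ^ 2 = 0) : v = 0 := by
  rw [Fin.sum_univ_two] at hv
  have h1 : v 1 = 0 := by
    by_contra h
    exact hK ⟨v 0 / v 1, by field_simp; linear_combination -hv⟩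
  have h0 : v 0 = 0 := by simpa [h1] using hv
  exact funext <| Fin.forall_fin_two.mpr ⟨h0, h1⟩

lemma card_le_card_of_isSquare_sum_sq_sub [Fintype K] (hK : ¬IsSquare (-1 : K))
    {a b : K} (hab : ¬IsSquare (a ^ 2 + b ^ 2)) (T : Finset (Fin 2 → K))
    (hT : ∀ r ∈ T, ∀ s ∈ T, IsSquare (∑ i, (r i - s i) ^ 2)) : #T ≤ Fintype.card K := by
  let A : (Fin 2 → K) → (Fin 2 → K) := fun s => ![a * s 0 - b * s 1, b * s 0 + a * s 1]
  have hA : ∀ s s', ∑ i, (A s i - A s' i) ^ 2 = (a ^ 2 + b ^ 2) * ∑ i, (s i - s' i) ^ 2 := by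
    intro s s'
    simp only [A, Fin.sum_univ_two, Matrix.cons_val_zero, Matrix.cons_val_one]
    ring
  -- a collision `r + A s = r' + A s'` would make `a² + b²` a ratio of squares
  have hinj : Set.InjOn (fun x : (Fin 2 → K) × (Fin 2 → K) => x.1 + A x.2) ↑(T ×ˢ T) := by
    rintro ⟨r, s⟩ hrs ⟨r', s'⟩ hrs' h
    simp only [coe_product, Set.mem_prod, mem_coe] at hrs hrs' h
    have hdiff : ∀ i, r i - r' i = A s' i - A s i := fun i => by
      have hi : r i + A s i = r' i + A s' i := congrFun h i
      linear_combination hi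
    obtain ⟨d, hd⟩ := hT r hrs.1 r' hrs'.1
    obtain ⟨e, he⟩ := hT s' hrs'.2 s hrs.2
    have he0 : e = 0 := by
      by_contra he0
      refine hab ⟨d / e, ?_⟩
      have : d * d = (a ^ 2 + b ^ 2) * (e * e) := by
        rw [← hd, ← he, ← hA]
        simp_rw [hdiff]
      field_simp
      linear_combination -this
    have hs : s' = s := by
      rw [he0, mul_zero] at he
      exact sub_eq_zero.mp (eq_zero_of_sum_sq_eq_zero hK he)
    subst hs
    rw [add_left_inj] at h
    rw [h]
  have hcard := card_le_card_of_injOn _ (fun _ _ => mem_coe.mpr (mem_univ _)) hinj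
  rw [card_product, card_univ, Fintype.card_fun, Fintype.card_fin, ← sq] at hcard
  exact (Nat.pow_le_pow_iff_left two_ne_zero).mp hcard

end AnisotropicPlane

section ReductionModP

variable {p : ℕ}

def reduceModP (p : ℕ) : ZMod (p ^ 2) →+* ZMod p :=
  ZMod.castHom (dvd_pow_self p two_ne_zero) (ZMod p)

lemma natCast_sq_eq_zero : (p : ZMod (p ^ 2)) ^ 2 = 0 := by
  rw [← Nat.cast_pow, ZMod.natCast_self]

variable [Fact p.Prime]

lemma val_reduceModP (x : ZMod (p ^ 2)) : (reduceModP p x).val = x.val % p := by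
  rw [reduceModP, ZMod.castHom_apply, ZMod.cast_eq_val, ZMod.val_natCast]

lemma natCast_dvd_of_reduceModP_eq_zero {x : ZMod (p ^ 2)} (hx : reduceModP p x = 0) :
    (p : ZMod (p ^ 2)) ∣ x := by
  obtain ⟨c, hc⟩ : p ∣ x.val := by
    rw [Nat.dvd_iff_mod_eq_zero, ← val_reduceModP, hx, ZMod.val_zero]
  exact ⟨c, by rw [← ZMod.natCast_zmod_val x, hc, Nat.cast_mul]⟩

lemma sq_eq_zero_of_reduceModP_eq_zero {x : ZMod (p ^ 2)} (hx : reduceModP p x = 0) :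
    x ^ 2 = 0 := by
  obtain ⟨c, rfl⟩ := natCast_dvd_of_reduceModP_eq_zero hx
  rw [mul_pow, natCast_sq_eq_zero, zero_mul]

lemma eq_zero_of_isSquare_of_reduceModP_eq_zero {x : ZMod (p ^ 2)} (hsq : IsSquare x)
    (hx : reduceModP p x = 0) : x = 0 := by
  obtain ⟨d, rfl⟩ := hsq
  rw [← sq] at hx ⊢
  rw [map_pow, pow_eq_zero_iff two_ne_zero] at hx
  exact sq_eq_zero_of_reduceModP_eq_zero hx

lemma isUnit_of_reduceModP_ne_zero {x : ZMod (p ^ 2)} (hx : reduceModP p x ≠ 0) : IsUnit x := by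
  have hndvd : ¬p ∣ x.val := by
    rwa [Nat.dvd_iff_mod_eq_zero, ← val_reduceModP, ZMod.val_eq_zero]
  rw [← ZMod.natCast_zmod_val x, ZMod.isUnit_iff_coprime]
  exact ((Nat.Prime.coprime_iff_not_dvd Fact.out).mpr hndvd).symm.pow_right 2

lemma card_le_of_reduceModP_eq {s : Finset (ZMod (p ^ 2))}
    (hs : ∀ x ∈ s, ∀ y ∈ s, reduceModP p x = reduceModP p y) : #s ≤ p := by
  have hp : 0 < p := (Fact.out : p.Prime).pos
  -- an element is determined by its residue `x.val % p` and its digit `x.val / p`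
  have hdigit : Set.MapsTo (fun x : ZMod (p ^ 2) => x.val / p) s (range p) := fun x _ => by
    rw [mem_coe, mem_range, Nat.div_lt_iff_lt_mul hp, ← sq]
    exact ZMod.val_lt x
  refine (card_le_card_of_injOn _ hdigit fun x hx y hy hxy => ?_).trans (card_range p).le
  have hmod : x.val % p = y.val % p := by
    rw [← val_reduceModP, ← val_reduceModP, hs x hx y hy]
  apply ZMod.val_injective
  calc x.val = p * (x.val / p) + x.val % p := (Nat.div_add_mod _ _).symm
    _ = p * (y.val / p) + y.val % p := by rw [show x.val / p = y.val / p from hxy, hmod]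
    _ = y.val := Nat.div_add_mod _ _

lemma card_le_of_reduceModP_comp_eq {m : ℕ} {S : Finset (Fin m → ZMod (p ^ 2))}
    (hS : ∀ u ∈ S, ∀ v ∈ S, ∀ i, reduceModP p (u i) = reduceModP p (v i)) : #S ≤ p ^ m := by
  classical
  calc #S ≤ #(Fintype.piFinset fun i => S.image (· i)) :=
        card_le_card fun u hu => Fintype.mem_piFinset.mpr fun i => mem_image_of_mem _ hu
    _ = ∏ i, #(S.image (· i)) := Fintype.card_piFinset _
    _ ≤ p ^ m := by
        refine (prod_le_pow_card _ _ p fun i _ => card_le_of_reduceModP_eq ?_).trans_eq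
          (by rw [card_univ, Fintype.card_fin])
        simp only [mem_image]
        rintro _ ⟨u, hu, rfl⟩ _ ⟨v, hv, rfl⟩
        exact hS u hu v hv i

lemma exists_sq_eq_neg_one_of_mod_four_eq_one (hp : p % 4 = 1) :
    ∃ I : ZMod (p ^ 2), I ^ 2 = -1 := by
  obtain ⟨j, hj⟩ := ZMod.exists_sq_eq_neg_one_iff.mpr (by omega : p % 4 ≠ 3)
  set J : ZMod (p ^ 2) := (j.val : ZMod (p ^ 2))
  have hJ : reduceModP p (J ^ 2 - -1) = 0 := by
    rw [map_sub, map_pow, map_neg, map_one, map_natCast, ZMod.natCast_zmod_val, hj]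
    ring
  -- a lift of a root of `-1` mod `p` becomes one mod `p²` after raising it to the `p`-th power
  have hlift := dvd_sub_pow_of_dvd_sub (natCast_dvd_of_reduceModP_eq_zero hJ) 1
  rw [pow_one, natCast_sq_eq_zero, zero_dvd_iff, sub_eq_zero,
    Odd.neg_one_pow (Nat.odd_iff.mpr (by omega))] at hlift
  exact ⟨J ^ p, by rw [← pow_mul, mul_comm, pow_mul, hlift]⟩

end ReductionModP

section SquareModulus

variable {p : ℕ} [Fact p.Prime]

lemma card_filter_reduceModP_eq_le {S : Finset (Fin 2 → ZMod (p ^ 2))}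
    (hS : ∀ u ∈ S, ∀ v ∈ S, IsSquare ((u 0 - v 0) * (u 1 - v 1))) (β : ZMod p) :
    #{u ∈ S | reduceModP p (u 1) = β} ≤ p ^ 2 := by
  set R := {u ∈ S | reduceModP p (u 1) = β}
  have hR : ∀ u ∈ R, ∀ v ∈ R, u ∈ S ∧ v ∈ S ∧ reduceModP p (u 1) = reduceModP p (v 1) :=
    fun u hu v hv => by
      rw [mem_filter] at hu hv
      exact ⟨hu.1, hv.1, hu.2.trans hv.2.symm⟩
  -- the product is a square divisible by `p`, hence `0`, and its first factor is a unit
  have key : ∀ u ∈ R, ∀ v ∈ R, reduceModP p (u 0) ≠ reduceModP p (v 0) → u 1 = v 1 := by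
    intro u hu v hv hne
    obtain ⟨huS, hvS, h1⟩ := hR u hu v hv
    have hzero := eq_zero_of_isSquare_of_reduceModP_eq_zero (hS u huS v hvS)
      (by rw [map_mul, map_sub, map_sub, h1, sub_self, mul_zero])
    have hunit : IsUnit (u 0 - v 0) :=
      isUnit_of_reduceModP_ne_zero (by rwa [map_sub, sub_ne_zero])
    exact sub_eq_zero.mp (hunit.mul_right_eq_zero.mp hzero)
  by_cases hres : ∀ u ∈ R, ∀ v ∈ R, reduceModP p (u 0) = reduceModP p (v 0)
  · exact card_le_of_reduceModP_comp_eq fun u hu v hv =>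
      Fin.forall_fin_two.mpr ⟨hres u hu v hv, (hR u hu v hv).2.2⟩
  · push Not at hres
    obtain ⟨w, hw, w', hw', hne⟩ := hres
    have hconst : ∀ u ∈ R, u 1 = w 1 := fun u hu => by
      by_cases h : reduceModP p (u 0) = reduceModP p (w 0)
      · rw [key u hu w' hw' (h ▸ hne), key w hw w' hw' hne]
      · exact key u hu w hw h
    calc #R ≤ #(univ : Finset (ZMod (p ^ 2))) :=
          card_le_card_of_injOn (· 0) (fun _ _ => mem_coe.mpr (mem_univ _))
            fun u hu v hv h =>
              funext <| Fin.forall_fin_two.mpr ⟨h, (hconst u hu).trans (hconst v hv).symm⟩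
      _ = p ^ 2 := by rw [card_univ, ZMod.card]

lemma card_le_pow_three_of_isSquare_mul_sub {S : Finset (Fin 2 → ZMod (p ^ 2))}
    (hS : ∀ u ∈ S, ∀ v ∈ S, IsSquare ((u 0 - v 0) * (u 1 - v 1))) : #S ≤ p ^ 3 := by
  calc #S ≤ p ^ 2 * #(S.image fun u => reduceModP p (u 1)) :=
        card_le_mul_card_image S _ fun β _ => card_filter_reduceModP_eq_le hS β
    _ ≤ p ^ 2 * p := Nat.mul_le_mul_left _ ((card_le_univ _).trans (ZMod.card p).le)
    _ = p ^ 3 := by ring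

lemma card_le_pow_three_of_isSquare_sum_sq_sub_of_mod_four_eq_one (hp : p % 4 = 1)
    (S : Finset (Fin 2 → ZMod (p ^ 2)))
    (hS : ∀ u ∈ S, ∀ v ∈ S, IsSquare (∑ i, (u i - v i) ^ 2)) : #S ≤ p ^ 3 := by
  obtain ⟨I, hI⟩ := exists_sq_eq_neg_one_of_mod_four_eq_one hp
  have hIunit : IsUnit I := .of_mul_eq_one (-I) (by linear_combination -hI)
  have h2unit : IsUnit (2 : ZMod (p ^ 2)) := isUnit_of_reduceModP_ne_zero <| by
    rw [map_ofNat]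
    exact Ring.two_ne_zero (by rw [ZMod.ringChar_zmod_n]; omega)
  -- in the isotropic coordinates `u 0 ± I u 1` the sum of squares factors
  let ψ : (Fin 2 → ZMod (p ^ 2)) → (Fin 2 → ZMod (p ^ 2)) :=
    fun u => ![u 0 + I * u 1, u 0 - I * u 1]
  have hψ : Function.Injective ψ := fun u v h => by
    have h0 := congrFun h 0
    have h1 := congrFun h 1
    simp only [ψ, Matrix.cons_val_zero, Matrix.cons_val_one] at h0 h1
    refine funext <| Fin.forall_fin_two.mpr ⟨?_, ?_⟩
    · exact h2unit.mul_left_cancel (by linear_combination h0 + h1)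
    · exact h2unit.mul_left_cancel (hIunit.mul_left_cancel (by linear_combination h0 - h1))
  rw [← card_image_of_injective S hψ]
  refine card_le_pow_three_of_isSquare_mul_sub ?_
  simp only [mem_image]
  rintro _ ⟨u, hu, rfl⟩ _ ⟨v, hv, rfl⟩
  convert hS u hu v hv using 1
  simp only [ψ, Fin.sum_univ_two, Matrix.cons_val_zero, Matrix.cons_val_one]
  linear_combination (-(u 1 - v 1) ^ 2) * hI

lemma card_le_pow_three_of_isSquare_sum_sq_sub_of_mod_four_eq_three (hp : p % 4 = 3)
    (S : Finset (Fin 2 → ZMod (p ^ 2)))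
    (hS : ∀ u ∈ S, ∀ v ∈ S, IsSquare (∑ i, (u i - v i) ^ 2)) : #S ≤ p ^ 3 := by
  classical
  set T := S.image fun u i => reduceModP p (u i)
  have hT : ∀ r ∈ T, ∀ s ∈ T, IsSquare (∑ i, (r i - s i) ^ 2) := by
    simp only [T, mem_image]
    rintro _ ⟨u, hu, rfl⟩ _ ⟨v, hv, rfl⟩
    simpa only [map_sum, map_pow, map_sub] using (hS u hu v hv).map (reduceModP p)
  have hTcard : #T ≤ p := by
    have hchar : ringChar (ZMod p) ≠ 2 := by rw [ZMod.ringChar_zmod_n]; omega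
    obtain ⟨c, hc⟩ := FiniteField.exists_nonsquare hchar
    obtain ⟨a, b, rfl⟩ := ZMod.sq_add_sq p c
    have hneg : ¬IsSquare (-1 : ZMod p) := by rw [ZMod.exists_sq_eq_neg_one_iff]; omega
    simpa using card_le_card_of_isSquare_sum_sq_sub hneg hc T hT
  calc #S ≤ p ^ 2 * #T := card_le_mul_card_image S _ fun r _ =>
        card_le_of_reduceModP_comp_eq fun u hu v hv i => by
          rw [mem_filter] at hu hv
          exact (congrFun hu.2 i).trans (congrFun hv.2 i).symm
    _ ≤ p ^ 2 * p := Nat.mul_le_mul_left _ hTcard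
    _ = p ^ 3 := by ring

lemma exists_isSquare_sum_sq_sub_card_eq_pow_three :
    ∃ S : Finset (Fin 2 → ZMod (p ^ 2)),
      (∀ u ∈ S, ∀ v ∈ S, IsSquare (∑ i, (u i - v i) ^ 2)) ∧ #S = p ^ 3 := by
  have hp : 0 < p := (Fact.out : p.Prime).pos
  set P := (range p).image fun k => ((p * k : ℕ) : ZMod (p ^ 2))
  refine ⟨Fintype.piFinset ![univ, P], fun u hu v hv => ⟨u 0 - v 0, ?_⟩, ?_⟩
  · have hP : ∀ x ∈ P, reduceModP p x = 0 := by
      simp only [P, mem_image]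
      rintro _ ⟨k, -, rfl⟩
      rw [map_natCast, ZMod.natCast_eq_zero_iff]
      exact dvd_mul_right p k
    have h1 : reduceModP p (u 1 - v 1) = 0 := by
      rw [map_sub, hP _ (Fintype.mem_piFinset.mp hu 1), hP _ (Fintype.mem_piFinset.mp hv 1),
        sub_zero]
    rw [Fin.sum_univ_two, sq_eq_zero_of_reduceModP_eq_zero h1, add_zero]
    exact sq _
  · have hPcard : #P = p := by
      refine (card_image_of_injOn fun k hk l hl h => ?_).trans (card_range p)
      have hlt : ∀ k ∈ (range p : Set ℕ), p * k < p ^ 2 := fun k hk => by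
        rw [sq]; exact Nat.mul_lt_mul_of_pos_left (mem_range.mp hk) hp
      have := congrArg ZMod.val h
      rw [ZMod.val_cast_of_lt (hlt k hk), ZMod.val_cast_of_lt (hlt l hl)] at this
      exact Nat.eq_of_mul_eq_mul_left hp this
    rw [Fintype.card_piFinset, Fin.prod_univ_two, Matrix.cons_val_zero, Matrix.cons_val_one,
      Matrix.cons_val_fin_one, card_univ, ZMod.card, hPcard]
    ring

lemma card_le_pow_three_of_isSquare_sum_sq_sub (hp : p ≠ 2) (S : Finset (Fin 2 → ZMod (p ^ 2)))
    (hS : ∀ u ∈ S, ∀ v ∈ S, IsSquare (∑ i, (u i - v i) ^ 2)) : #S ≤ p ^ 3 := by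
  have hodd : p % 2 = 1 := Nat.odd_iff.mp ((Fact.out : p.Prime).odd_of_ne_two hp)
  rcases Nat.odd_mod_four_iff.mp hodd with h | h
  exacts [card_le_pow_three_of_isSquare_sum_sq_sub_of_mod_four_eq_one h S hS,
    card_le_pow_three_of_isSquare_sum_sq_sub_of_mod_four_eq_three h S hS]

end SquareModulus

theorem maxIntegralCard_prime_sq_plane (p : ℕ) (hp : p.Prime) (hp3 : 3 ≤ p) :
    maxIntegralCard (p ^ 2) 2 = p ^ 3 := by
  have := Fact.mk hp
  refine maxIntegralCard_eq (fun S hS => ?_) ?_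
  · exact card_le_pow_three_of_isSquare_sum_sq_sub (by omega) S
      (by simpa only [integralDistance_iff_isSquare] using hS)
  · simpa only [integralDistance_iff_isSquare] using exists_isSquare_sum_sq_sub_card_eq_pow_three
end

section
/- Let p be a prime with p ≡ 1 (mod 4) and let ω ∈ ℤ/pℤ satisfy ω² = −1. Let □_p = {i² : i ∈ ℤ/pℤ} be the set of squares of ℤ/pℤ, and let P = {(q, ω·q) : q ∈ □_p} ∪ {(q, −ω·q) : q ∈ □_p} ⊆ (ℤ/pℤ)². Then P has pairwise integral distances, P has cardinality exactly p, and the points of P are not collinear. -/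
/-!
Since `ω² = -1`, the lines `y = ωx` and `y = -ωx` are isotropic: two points on the same line are
at squared distance `0`, while `(i², ωi²)` and `(j², -ωj²)` are at squared distance
`(i² - j²)² - (i² + j²)² = (2ωij)²`. Each line carries the `(p + 1) / 2` squares and the two lines
meet only at the origin, which gives `p` points. Finally `(1, ω)` and `(1, -ω)` are distinct points
with the same abscissa, so a line through them is vertical and misses the origin.
-/

/-- Two points `u, v ∈ (ℤ/nℤ)²` are at integral distance if there exists
`d ∈ ℤ/nℤ` with `(u₁ - v₁)² + (u₂ - v₂)² = d²`. -/
def IntegralDistance2 (n : ℕ) (u v : ZMod n × ZMod n) : Prop :=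
  ∃ d : ZMod n, (u.1 - v.1) ^ 2 + (u.2 - v.2) ^ 2 = d ^ 2

/-- A set of points of `(ℤ/nℤ)²` is collinear if there are `a, b, t₁, t₂ ∈ ℤ/nℤ`
such that every point of the set has the form `(a + w·t₁, b + w·t₂)` for some `w`. -/
def SetCollinear (n : ℕ) (P : Set (ZMod n × ZMod n)) : Prop :=
  ∃ a b t₁ t₂ : ZMod n, ∀ x ∈ P, ∃ w : ZMod n, x.1 = a + w * t₁ ∧ x.2 = b + w * t₂

open Finset

section SquaresCount

variable {F : Type*} [Field F] [Fintype F]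

theorem filter_sq_eq_sq [DecidableEq F] (i : F) : ({x | x ^ 2 = i ^ 2} : Finset F) = {i, -i} := by
  ext x
  simp [sq_eq_sq_iff_eq_or_eq_neg]

theorem card_filter_sq_eq_sq [DecidableEq F] (hF : ringChar F ≠ 2) {i : F} (hi : i ≠ 0) :
    #({x | x ^ 2 = i ^ 2} : Finset F) = 2 :=
  filter_sq_eq_sq i ▸ card_pair (Ne.symm (mt (Ring.eq_self_iff_eq_zero_of_char_ne_two hF).mp hi))

theorem two_mul_card_image_sq [DecidableEq F] (hF : ringChar F ≠ 2) :
    2 * #(univ.image fun i : F => i ^ 2) = Fintype.card F + 1 := by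
  set S := univ.image fun i : F => i ^ 2
  have h0 : (0 : F) ∈ S := mem_image.mpr ⟨0, mem_univ _, zero_pow two_ne_zero⟩
  have hfiber : ∀ b ∈ S.erase 0, #({x | x ^ 2 = b} : Finset F) = 2 := by
    intro b hb
    obtain ⟨i, -, rfl⟩ := mem_image.mp (mem_of_mem_erase hb)
    exact card_filter_sq_eq_sq hF (pow_ne_zero_iff two_ne_zero |>.mp (ne_of_mem_erase hb))
  have hfiber0 : #({x | x ^ 2 = 0} : Finset F) = 1 := by
    simpa using congrArg card (filter_sq_eq_sq (0 : F))
  have hS : 1 ≤ #S := card_pos.mpr ⟨0, h0⟩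
  have hcard := card_eq_sum_card_image (fun i : F => i ^ 2) univ
  rw [← add_sum_erase _ _ h0, sum_congr rfl hfiber, sum_const, card_erase_of_mem h0,
    hfiber0, smul_eq_mul, card_univ] at hcard
  omega

theorem two_mul_ncard_squares (hF : ringChar F ≠ 2) :
    2 * {x : F | ∃ i, x = i ^ 2}.ncard = Fintype.card F + 1 := by
  classical
  have hsquares : {x : F | ∃ i, x = i ^ 2} = ↑(univ.image fun i : F => i ^ 2) := by
    ext x
    simp [eq_comm]
  rw [hsquares, Set.ncard_coe_finset, two_mul_card_image_sq hF]

end SquaresCount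

def isotropicPointSet {R : Type*} [CommRing R] (ω : R) : Set (R × R) :=
  (fun q : R => (q, ω * q)) '' {x | ∃ i : R, x = i ^ 2} ∪
    (fun q : R => (q, -ω * q)) '' {x | ∃ i : R, x = i ^ 2}

theorem integralDistance2_of_mem_isotropicPointSet {n : ℕ} {ω : ZMod n} (hω : ω ^ 2 = -1)
    {u v : ZMod n × ZMod n} (hu : u ∈ isotropicPointSet ω) (hv : v ∈ isotropicPointSet ω) :
    IntegralDistance2 n u v := by
  rcases hu with ⟨_, ⟨i, rfl⟩, rfl⟩ | ⟨_, ⟨i, rfl⟩, rfl⟩ <;>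
    rcases hv with ⟨_, ⟨j, rfl⟩, rfl⟩ | ⟨_, ⟨j, rfl⟩, rfl⟩
  · exact ⟨0, by linear_combination (i ^ 2 - j ^ 2) ^ 2 * hω⟩
  · exact ⟨2 * ω * i * j, by linear_combination (i ^ 2 - j ^ 2) ^ 2 * hω⟩
  · exact ⟨2 * ω * i * j, by linear_combination (i ^ 2 - j ^ 2) ^ 2 * hω⟩
  · exact ⟨0, by linear_combination (i ^ 2 - j ^ 2) ^ 2 * hω⟩

theorem ne_zero_of_sq_eq_neg_one {R : Type*} [Ring R] [Nontrivial R] {ω : R}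
    (hω : ω ^ 2 = -1) : ω ≠ 0 := by
  rintro rfl
  simp at hω

section Field

variable {F : Type*} [Field F]

theorem image_inter_image_neg_eq_origin (hF : ringChar F ≠ 2) {ω : F} (hω : ω ≠ 0) {S : Set F}
    (hS : 0 ∈ S) :
    (fun q : F => (q, ω * q)) '' S ∩ (fun q : F => (q, -ω * q)) '' S = {(0, 0)} := by
  refine Set.eq_singleton_iff_unique_mem.mpr ⟨⟨⟨0, hS, by simp⟩, ⟨0, hS, by simp⟩⟩, ?_⟩
  rintro _ ⟨⟨q, -, rfl⟩, ⟨r, -, hr⟩⟩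
  obtain ⟨rfl, hωq⟩ := Prod.mk.inj hr
  have : ω * r = 0 := (Ring.eq_self_iff_eq_zero_of_char_ne_two hF).mp (by linear_combination hωq)
  simp [(mul_eq_zero.mp this).resolve_left hω]

theorem ncard_isotropicPointSet [Fintype F] (hF : ringChar F ≠ 2) {ω : F} (hω : ω ^ 2 = -1) :
    (isotropicPointSet ω).ncard = Fintype.card F := by
  have hunion := Set.ncard_union_add_ncard_inter
    ((fun q : F => (q, ω * q)) '' {x | ∃ i : F, x = i ^ 2})
    ((fun q : F => (q, -ω * q)) '' {x | ∃ i : F, x = i ^ 2})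
  rw [image_inter_image_neg_eq_origin hF (ne_zero_of_sq_eq_neg_one hω)
      (S := {x | ∃ i : F, x = i ^ 2}) ⟨0, by ring⟩,
    Set.ncard_singleton, Set.ncard_image_of_injective _ fun _ _ h => (Prod.mk.inj h).1,
    Set.ncard_image_of_injective _ fun _ _ h => (Prod.mk.inj h).1] at hunion
  have hsquares := two_mul_ncard_squares hF
  unfold isotropicPointSet
  omega

end Field

theorem SetCollinear.fst_eq {p : ℕ} [Fact p.Prime] {P : Set (ZMod p × ZMod p)}
    (hP : SetCollinear p P) {x y z : ZMod p × ZMod p} (hx : x ∈ P) (hy : y ∈ P) (hz : z ∈ P)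
    (hyz₁ : y.1 = z.1) (hyz₂ : y.2 ≠ z.2) : x.1 = y.1 := by
  obtain ⟨a, b, t₁, t₂, hline⟩ := hP
  obtain ⟨wx, hx₁, -⟩ := hline x hx
  obtain ⟨wy, hy₁, hy₂⟩ := hline y hy
  obtain ⟨wz, hz₁, hz₂⟩ := hline z hz
  have hw : wy - wz ≠ 0 := by
    refine sub_ne_zero.mpr fun h => hyz₂ ?_
    rw [hy₂, hz₂, h]
  have ht₁ : t₁ = 0 :=
    (mul_eq_zero.mp (by linear_combination hz₁ - hy₁ + hyz₁ : (wy - wz) * t₁ = 0)).resolve_left hw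
  rw [hx₁, hy₁, ht₁, mul_zero, mul_zero]

theorem not_setCollinear_isotropicPointSet {p : ℕ} [Fact p.Prime] (hF : ringChar (ZMod p) ≠ 2)
    {ω : ZMod p} (hω : ω ^ 2 = -1) : ¬ SetCollinear p (isotropicPointSet ω) := by
  intro hP
  have hωω : ω ≠ -ω := fun h =>
    ne_zero_of_sq_eq_neg_one hω ((Ring.eq_self_iff_eq_zero_of_char_ne_two hF).mp h.symm)
  have h := hP.fst_eq (x := (0, 0)) (y := (1, ω)) (z := (1, -ω))
    (Or.inl ⟨0, ⟨0, by ring⟩, by simp⟩) (Or.inl ⟨1, ⟨1, by ring⟩, by simp⟩)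
    (Or.inr ⟨1, ⟨1, by ring⟩, by simp⟩) rfl hωω
  exact zero_ne_one h

theorem integral_point_set_of_omega (p : ℕ) (hp : p.Prime) (hp4 : p % 4 = 1)
    (ω : ZMod p) (hω : ω ^ 2 = -1) :
    (∀ u ∈ ((fun q : ZMod p => (q, ω * q)) '' {x | ∃ i : ZMod p, x = i ^ 2} ∪
            (fun q : ZMod p => (q, -ω * q)) '' {x | ∃ i : ZMod p, x = i ^ 2}),
      ∀ v ∈ ((fun q : ZMod p => (q, ω * q)) '' {x | ∃ i : ZMod p, x = i ^ 2} ∪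
            (fun q : ZMod p => (q, -ω * q)) '' {x | ∃ i : ZMod p, x = i ^ 2}),
        IntegralDistance2 p u v) ∧
    ((fun q : ZMod p => (q, ω * q)) '' {x | ∃ i : ZMod p, x = i ^ 2} ∪
      (fun q : ZMod p => (q, -ω * q)) '' {x | ∃ i : ZMod p, x = i ^ 2}).ncard = p ∧
    ¬ SetCollinear p
      ((fun q : ZMod p => (q, ω * q)) '' {x | ∃ i : ZMod p, x = i ^ 2} ∪
        (fun q : ZMod p => (q, -ω * q)) '' {x | ∃ i : ZMod p, x = i ^ 2}) := by
  have := Fact.mk hp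
  have hchar : ringChar (ZMod p) ≠ 2 := by
    rw [ZMod.ringChar_zmod_n]
    omega
  refine ⟨fun u hu v hv => integralDistance2_of_mem_isotropicPointSet hω hu hv, ?_,
    not_setCollinear_isotropicPointSet hchar hω⟩
  exact (ncard_isotropicPointSet hchar hω).trans (ZMod.card p)
end

section
/- Let p be a prime with p ≡ 3 (mod 4). Then every subset of (ℤ/pℤ)² of cardinality p whose points are pairwise at integral distance is collinear. -/
open Polynomial Finset Function

theorem sum_sub_mul_pow_eq_zero {K : Type*} [Field K] [Fintype K] (f : K → K) (S : Finset K)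
    (hS : ∀ c ∈ S, Injective fun x => f x - c * x) {j : ℕ} (hj : 0 < j) (hjS : j ≤ #S)
    (hjK : j < Fintype.card K - 1) (c : K) :
    ∑ x, (f x - c * x) ^ j = 0 := by
  set Q : K[X] := ∑ x, (C (f x) - C x * X) ^ j
  have heval (c : K) : Q.eval c = ∑ x, (f x - c * x) ^ j := by
    simp only [Q, eval_finsetSum, eval_pow, eval_sub, eval_mul, eval_C, eval_X, mul_comm]
  have hlin (x : K) : (C (f x) - C x * X).natDegree ≤ 1 := by compute_degree
  have hQ : Q.natDegree < j := by
    have hle : Q.natDegree ≤ j := natDegree_sum_le_of_forall_le _ _ fun x _ =>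
      (natDegree_pow_le_of_le j (hlin x)).trans_eq (mul_one j)
    have htop : Q.coeff j = 0 := by
      have (x : K) : ((C (f x) - C x * X) ^ j).coeff j = (-1) ^ j * x ^ j := by
        have h := coeff_pow_of_natDegree_le (m := j) (hlin x)
        rw [mul_one] at h
        rw [h, coeff_sub, coeff_C, if_neg one_ne_zero, coeff_C_mul_X, if_pos rfl, zero_sub, neg_pow]
      simp only [Q, finsetSum_coeff, this, ← mul_sum, FiniteField.sum_pow_lt_card_sub_one K j hjK,
        mul_zero]
    refine hle.lt_of_ne fun h => ?_
    have hQ0 : Q ≠ 0 := by rintro h0; simp [h0] at h; omega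
    exact leadingCoeff_ne_zero.2 hQ0 (by rwa [leadingCoeff, h])
  have hQ0 : Q = 0 := by
    refine eq_zero_of_natDegree_lt_card_of_eval_eq_zero' Q S (fun c hc => ?_) (hQ.trans_le hjS)
    rw [heval, Fintype.sum_bijective _ (hS c hc).bijective_of_finite _ (· ^ j) fun _ => rfl]
    exact FiniteField.sum_pow_lt_card_sub_one K j hjK
  rw [← heval, hQ0, eval_zero]

theorem prod_X_sub_C_eq_multiset_prod {σ R : Type*} [Fintype σ] [CommRing R] (v : σ → R) :
    ∏ i, (X - C (v i)) = ((univ.val.map v).map fun t => X - C t).prod := by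
  rw [Multiset.map_map]; rfl

theorem coeff_prod_X_sub_C_eq_zero_of_sum_pow_eq_zero {σ K : Type*} [Fintype σ] [CommRing K]
    [IsDomain K] (v : σ → K) {k : ℕ} (hkσ : k ≤ Fintype.card σ) (hk : (k : K) ≠ 0)
    (hv : ∀ j, 0 < j → j ≤ k → ∑ i, v i ^ j = 0) :
    (∏ i, (X - C (v i))).coeff (Fintype.card σ - k) = 0 := by
  -- Newton's identity writes `k * e_k` as a combination of products `e_a * p_b` with `0 < b ≤ k`.
  have hesymm : (k : K) * (univ.val.map v).esymm k = 0 := by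
    have h := congrArg (MvPolynomial.aeval v) (MvPolynomial.mul_esymm_eq_sum σ K k)
    rwa [map_mul, map_natCast, MvPolynomial.aeval_esymm_eq_multiset_esymm, map_mul, map_sum,
      sum_eq_zero, mul_zero] at h
    intro a ha
    rw [mem_filter, HasAntidiagonal.mem_antidiagonal] at ha
    have hpsum : MvPolynomial.aeval v (MvPolynomial.psum σ K a.2) = 0 := by
      simpa [MvPolynomial.psum] using hv a.2 (by omega) (by omega)
    rw [map_mul, hpsum, mul_zero]
  rw [prod_X_sub_C_eq_multiset_prod, Multiset.prod_X_sub_C_coeff _ (by simp)]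
  simp [Nat.sub_sub_self hkσ, (mul_eq_zero.1 hesymm).resolve_left hk]

theorem eq_C_of_derivative_eq_zero_of_natDegree_lt {R : Type*} [CommRing R] [IsDomain R] {p : ℕ}
    [CharP R p] (hp : p ≠ 0) {f : R[X]} (hf : derivative f = 0) (hdeg : f.natDegree < p) :
    f = C (f.coeff 0) := by
  refine eq_C_of_natDegree_eq_zero ?_
  rw [← expand_contract p hf hp, natDegree_expand] at hdeg ⊢
  have : (contract p f).natDegree < 1 := Nat.lt_of_mul_lt_mul_right (by rwa [one_mul])
  rw [Nat.lt_one_iff.1 this, zero_mul]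

theorem roots_prod_X_sub_C_comp {σ R : Type*} [Fintype σ] [CommRing R] [IsDomain R]
    (v : σ → R) : (∏ i, (X - C (v i))).roots = univ.val.map v := by
  rw [prod_X_sub_C_eq_multiset_prod, roots_multiset_prod_X_sub_C]

theorem card_sub_card_image_le_natDegree_derivative {σ R : Type*} [Fintype σ] [CommRing R]
    [IsDomain R] [DecidableEq R] (v : σ → R) (h : derivative (∏ i, (X - C (v i))) ≠ 0) :
    Fintype.card σ - #(univ.image v) ≤ (derivative (∏ i, (X - C (v i)))).natDegree := by
  set s := univ.val.map v
  have hle : s - s.dedup ≤ (derivative (∏ i, (X - C (v i)))).roots := by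
    refine Multiset.le_iff_count.2 fun a => ?_
    rw [Multiset.count_sub, count_roots]
    by_cases ha : a ∈ s
    · rw [Multiset.count_eq_one_of_mem s.nodup_dedup (Multiset.mem_dedup.2 ha)]
      have := rootMultiplicity_sub_one_le_derivative_rootMultiplicity_of_ne_zero _ a h
      rwa [← count_roots, roots_prod_X_sub_C_comp] at this
    · simp [Multiset.count_eq_zero_of_notMem ha]
  calc Fintype.card σ - #(univ.image v) = Multiset.card (s - s.dedup) := by
        rw [Multiset.card_sub (Multiset.dedup_le s)]
        simp [s, Finset.image, Multiset.card_toFinset]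
    _ ≤ _ := (Multiset.card_le_card hle).trans (card_roots' _)

theorem injective_of_prod_X_sub_C_eq_X_pow_card_sub_X {K : Type*} [Field K] [Fintype K]
    (v : K → K) (h : ∏ x, (X - C (v x)) = X ^ Fintype.card K - X) : Injective v := by
  have hroots := congrArg roots h
  rw [roots_prod_X_sub_C_comp, FiniteField.roots_X_pow_card_sub_X] at hroots
  have hnodup : (univ.val.map v).Nodup := by rw [hroots]; exact univ.nodup
  intro x y hxy
  exact (Multiset.nodup_map_iff_inj_on univ.nodup).1 hnodup x (mem_univ x) y (mem_univ y) hxy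

theorem natDegree_prod_X_sub_C_sub_X_pow_le {p m : ℕ} [Fact p.Prime] (hmp : m < p)
    (v : ZMod p → ZMod p) (hv : ∀ j, 0 < j → j ≤ m → ∑ x, v x ^ j = 0) :
    (∏ x, (X - C (v x)) - X ^ p).natDegree ≤ p - 1 - m := by
  have hmonic : (∏ x, (X - C (v x))).Monic := monic_prod_of_monic _ _ fun x _ => monic_X_sub_C _
  have hdeg : (∏ x, (X - C (v x))).natDegree = p := by
    rw [natDegree_prod_of_monic _ _ fun x _ => monic_X_sub_C _]
    simp [ZMod.card]
  refine natDegree_le_iff_coeff_eq_zero.2 fun k hk => ?_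
  rw [coeff_sub, coeff_X_pow]
  rcases lt_trichotomy k p with hkp | hkp | hkp
  · have hk' : ((p - k : ℕ) : ZMod p) ≠ 0 := by
      rw [Ne, ZMod.natCast_eq_zero_iff]
      exact Nat.not_dvd_of_pos_of_lt (by omega) (by omega)
    have h := coeff_prod_X_sub_C_eq_zero_of_sum_pow_eq_zero v (by simp [ZMod.card]) hk'
      fun j hj0 hj => hv j hj0 (by omega)
    rw [ZMod.card, Nat.sub_sub_self hkp.le] at h
    rw [h, if_neg hkp.ne, sub_zero]
  · have hlead := hmonic.coeff_natDegree
    rw [hdeg] at hlead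
    rw [if_pos hkp, hkp, hlead, sub_self]
  · rw [coeff_eq_zero_of_natDegree_lt (by rwa [hdeg]), if_neg hkp.ne', sub_self]

theorem injective_or_exists_const_of_sum_pow_eq_zero {p m : ℕ} [Fact p.Prime]
    (hpm : p = 2 * m + 1) (v : ZMod p → ZMod p)
    (hv : ∀ j, 0 < j → j ≤ m → ∑ x, v x ^ j = 0) : Injective v ∨ ∃ γ, ∀ x, v x = γ := by
  have hm : 1 ≤ m := by have := (Fact.out : p.Prime).two_le; omega
  set F : (ZMod p)[X] := ∏ x, (X - C (v x))
  set W := F - X ^ p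
  have hWdeg : W.natDegree ≤ m :=
    (natDegree_prod_X_sub_C_sub_X_pow_le (by omega) v hv).trans (by omega)
  have hderiv : derivative F = derivative W := by simp [W, derivative_X_pow]
  have hWroot (x : ZMod p) : (W + X).eval (v x) = 0 := by
    have hFroot : F.eval (v x) = 0 := by
      rw [eval_prod]
      exact prod_eq_zero (mem_univ x) (by simp)
    simp [W, hFroot, ZMod.pow_card]
  by_cases hW' : derivative W = 0
  · right
    have hWC := eq_C_of_derivative_eq_zero_of_natDegree_lt (Fact.out : p.Prime).ne_zero hW'
      (by omega)
    refine ⟨-W.coeff 0, fun x => ?_⟩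
    have := hWroot x
    rw [hWC, eval_add, eval_C, eval_X] at this
    linear_combination this
  · left
    by_contra hinj
    have hWX : W + X ≠ 0 := fun h0 => hinj <|
      injective_of_prod_X_sub_C_eq_X_pow_card_sub_X v (by
        rw [ZMod.card]; linear_combination (exp := 1) h0)
    -- `#(image v) ≤ deg (W + X) ≤ m`, while `p - #(image v) ≤ deg W' < m`
    have hV : #(univ.image v) ≤ m := by
      calc #(univ.image v) ≤ (W + X).roots.toFinset.card := card_le_card fun w hw => by
            obtain ⟨x, -, rfl⟩ := mem_image.1 hw
            simpa [hWX] using hWroot x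
        _ ≤ (W + X).natDegree := (Multiset.toFinset_card_le _).trans (card_roots' _)
        _ ≤ m := (natDegree_add_le _ _).trans (max_le hWdeg (natDegree_X_le.trans hm))
    have hμ := card_sub_card_image_le_natDegree_derivative v (hderiv ▸ hW')
    rw [hderiv, ZMod.card] at hμ
    have := natDegree_derivative_le W
    omega

theorem exists_affine_of_le_card_injective_sub_mul {p m : ℕ} [Fact p.Prime]
    (hpm : p = 2 * m + 1) (f : ZMod p → ZMod p) (S : Finset (ZMod p)) (hS : m ≤ #S)
    (hinj : ∀ c ∈ S, Injective fun x => f x - c * x) : ∃ a b, ∀ x, f x = a * x + b := by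
  set a := f 1 - f 0
  have hv : ∀ j, 0 < j → j ≤ m → ∑ x, (f x - a * x) ^ j = 0 := fun j hj0 hj =>
    sum_sub_mul_pow_eq_zero f S hinj hj0 (hj.trans hS) (by rw [ZMod.card]; omega) a
  obtain hinj | ⟨b, hb⟩ := injective_or_exists_const_of_sum_pow_eq_zero hpm _ hv
  · exact absurd (@hinj 0 1 (by simp [a])) zero_ne_one
  · exact ⟨a, b, fun x => by linear_combination hb x⟩

theorem isSquare_one_add_div_sq {K : Type*} [Field K] {a b d : K} (ha : a ≠ 0)
    (h : a ^ 2 + b ^ 2 = d ^ 2) : IsSquare (1 + (b / a) ^ 2) :=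
  ⟨d / a, by field_simp; linear_combination h⟩

theorem two_mul_card_le_of_isSquare_one_add_sq {K : Type*} [Field K] [Fintype K] [DecidableEq K]
    (hK : ¬IsSquare (-1 : K)) (s : Finset K) (hs : ∀ t ∈ s, IsSquare (1 + t ^ 2)) :
    2 * #s ≤ Fintype.card K - 1 := by
  have h2 : (2 : K) ≠ 0 := fun h => hK ⟨1, by linear_combination -h⟩
  set φ : K → K := fun u => (u - u⁻¹) / 2
  have hsub : s ⊆ (univ.erase 0).image φ := by
    intro t ht
    obtain ⟨r, hr⟩ := hs t ht
    have hu : r + t ≠ 0 := fun h => one_ne_zero (α := K) (by linear_combination hr + (r - t) * h)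
    refine mem_image.2 ⟨r + t, mem_erase.2 ⟨hu, mem_univ _⟩, ?_⟩
    have hinv : (r + t)⁻¹ = r - t := inv_eq_of_mul_eq_one_right (by linear_combination -hr)
    simp only [φ, hinv]
    field_simp
    ring
  have hfiber : ∀ y ∈ (univ.erase 0).image φ, 2 ≤ #{u ∈ univ.erase 0 | φ u = y} := by
    intro y hy
    obtain ⟨u, hu, rfl⟩ := mem_image.1 hy
    have hu0 : u ≠ 0 := (mem_erase.1 hu).1
    have hne : u ≠ -u⁻¹ := fun h => hK ⟨u, by field_simp at h; linear_combination -h⟩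
    refine le_of_eq_of_le (card_pair hne).symm (card_le_card fun w hw => ?_)
    simp only [mem_insert, mem_singleton] at hw
    rcases hw with rfl | rfl
    · simp [hu0]
    · simp only [mem_filter, mem_erase, ne_eq, neg_eq_zero, inv_eq_zero, hu0, not_false_eq_true,
        mem_univ, and_self, true_and, φ, inv_neg, inv_inv]
      ring
  have := mul_card_image_le_card (univ.erase 0) 2 hfiber
  rw [card_erase_of_mem (mem_univ 0), card_univ] at this
  exact (Nat.mul_le_mul_left 2 (card_le_card hsub)).trans this

theorem injOn_sub_mul_of_not_isSquare {p : ℕ} [Fact p.Prime] {P : Finset (ZMod p × ZMod p)}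
    (hint : ∀ u ∈ P, ∀ v ∈ P, IntegralDistance2 p u v) {s : ZMod p}
    (hs : ¬IsSquare (1 + s ^ 2)) : Set.InjOn (fun x : ZMod p × ZMod p => x.2 - s * x.1) P := by
  intro u hu w hw h
  simp only at h
  by_cases ha : u.1 = w.1
  · exact Prod.ext ha (by linear_combination h + s * ha)
  · obtain ⟨d, hd⟩ := hint u hu w hw
    have hslope : (u.2 - w.2) / (u.1 - w.1) = s := by
      rw [div_eq_iff (sub_ne_zero.2 ha)]; linear_combination h
    exact absurd (hslope ▸ isSquare_one_add_div_sq (sub_ne_zero.2 ha) hd) hs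

theorem setCollinear_of_le_card_injOn_sub_mul {p m : ℕ} [Fact p.Prime] (hpm : p = 2 * m + 1)
    {P : Finset (ZMod p × ZMod p)} (hcard : #P = p) (T : Finset (ZMod p)) (hT : m + 1 ≤ #T)
    (hinj : ∀ t ∈ T, Set.InjOn (fun x : ZMod p × ZMod p => x.2 - t * x.1) P) :
    SetCollinear p P := by
  obtain ⟨s, hs⟩ := card_pos.1 (by omega : 0 < #T)
  have hπ := hinj s hs
  -- projecting along the slope `s` identifies `P` with the graph of `w ↦ (g w).1`
  obtain ⟨g, hg⟩ :
      ∃ g : ZMod p → ZMod p × ZMod p, ∀ w, g w ∈ P ∧ (g w).2 - s * (g w).1 = w := by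
    have := surjOn_of_injOn_of_card_le _ (fun _ _ => mem_coe.2 (mem_univ _)) hπ (t := univ)
      (by simp [hcard])
    choose g hg using fun w => this (mem_univ w)
    exact ⟨g, hg⟩
  have hgraph (t : ZMod p) (ht : t ∈ T) (hts : t ≠ s) :
      Injective fun w => (g w).1 - (t - s)⁻¹ * w := by
    intro w₁ w₂ h
    have hproj (w : ZMod p) : (g w).2 - t * (g w).1 = -(t - s) * ((g w).1 - (t - s)⁻¹ * w) := by
      field_simp [sub_ne_zero.2 hts]
      linear_combination (hg w).2
    have hgw : g w₁ = g w₂ := hinj t ht (hg w₁).1 (hg w₂).1 <| by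
      simp only at h ⊢
      rw [hproj, hproj, h]
    rw [← (hg w₁).2, ← (hg w₂).2, hgw]
  have hS : m ≤ #((T.erase s).image fun t => (t - s)⁻¹) := by
    have hinv : Injective fun t : ZMod p => (t - s)⁻¹ := inv_injective.comp (sub_left_injective)
    rw [card_image_of_injective _ hinv, card_erase_of_mem hs]
    omega
  obtain ⟨a, b, hab⟩ := exists_affine_of_le_card_injective_sub_mul hpm (fun w => (g w).1) _ hS
    fun c hc => by
      obtain ⟨t, ht, rfl⟩ := mem_image.1 hc
      exact hgraph t (mem_of_mem_erase ht) (ne_of_mem_erase ht)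
  refine ⟨b, s * b, a, 1 + s * a, fun x hx => ⟨x.2 - s * x.1, ?_, ?_⟩⟩
  all_goals
    have hx : g (x.2 - s * x.1) = x := hπ (hg _).1 hx (hg _).2
    have h1 := hab (x.2 - s * x.1)
    rw [hx] at h1
  · linear_combination h1
  · linear_combination s * h1

theorem integral_point_set_collinear_of_three_mod_four (p : ℕ) (hp : p.Prime)
    (hp4 : p % 4 = 3) (P : Finset (ZMod p × ZMod p)) (hcard : P.card = p)
    (hint : ∀ u ∈ P, ∀ v ∈ P, IntegralDistance2 p u v) :
    SetCollinear p ↑P := by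
  have := Fact.mk hp
  obtain ⟨m, hpm⟩ : ∃ m, p = 2 * m + 1 := ⟨p / 2, by omega⟩
  have hneg : ¬IsSquare (-1 : ZMod p) := by rw [ZMod.exists_sq_eq_neg_one_iff]; omega
  set T := univ.filter fun t : ZMod p => ¬IsSquare (1 + t ^ 2)
  have hT : m + 1 ≤ #T := by
    have := two_mul_card_le_of_isSquare_one_add_sq hneg Tᶜ (by simp [T])
    rw [card_compl, ZMod.card] at this
    omega
  exact setCollinear_of_le_card_injOn_sub_mul hpm hcard T hT fun t ht =>
    injOn_sub_mul_of_not_isSquare hint (mem_filter.1 ht).2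
end

section
/- Let p be a prime with p ≡ 3 (mod 4). Then \overline{I}(p,2) = (p+1)/2; that is, the maximum cardinality of a subset of (ℤ/pℤ)² whose points are pairwise at integral distance and no three of whose points are collinear equals (p+1)/2. -/
/-- Points `p₁, p₂, p₃ ∈ (ℤ/nℤ)²` are collinear if there are
`a, b, t₁, t₂, wᵢ ∈ ℤ/nℤ` with `pᵢ = (a + wᵢ·t₁, b + wᵢ·t₂)`. -/
def Collinear3 (n : ℕ) (p₁ p₂ p₃ : ZMod n × ZMod n) : Prop :=
  ∃ a b t₁ t₂ w₁ w₂ w₃ : ZMod n,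
    p₁.1 = a + w₁ * t₁ ∧ p₁.2 = b + w₁ * t₂ ∧
    p₂.1 = a + w₂ * t₁ ∧ p₂.2 = b + w₂ * t₂ ∧
    p₃.1 = a + w₃ * t₁ ∧ p₃.2 = b + w₃ * t₂

/-- A set of points of `(ℤ/nℤ)²` is in semi-general position if no three of its
points are collinear. -/
def SemiGeneralPosition (n : ℕ) (S : Finset (ZMod n × ZMod n)) : Prop :=
  ∀ p₁ ∈ S, ∀ p₂ ∈ S, ∀ p₃ ∈ S,
    p₁ ≠ p₂ → p₁ ≠ p₃ → p₂ ≠ p₃ → ¬ Collinear3 n p₁ p₂ p₃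

/-- `maxIntegralCardSGP n` (denoted `Ī(n,2)` in the paper) is the maximum
cardinality of a subset of `(ℤ/nℤ)²` with pairwise integral distances and
no three points collinear. -/
noncomputable def maxIntegralCardSGP (n : ℕ) : ℕ :=
  sSup {k : ℕ | ∃ S : Finset (ZMod n × ZMod n),
    (∀ u ∈ S, ∀ v ∈ S, IntegralDistance2 n u v) ∧
      SemiGeneralPosition n S ∧ S.card = k}

/-! Since `p ≡ 3 (mod 4)`, `-1` is not a square mod `p`, so `x² + y² = 0` only at the origin.

Upper bound: seen from a point `x` of such a set `S`, the other points lie in pairwise distinct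
directions, and a direction of slope `m` occurs only if `1 + m²` is a square, which happens for
`(p - 1) / 2` slopes. So `|S| ≤ (p + 3) / 2`, and equality forces every vertical line through a
point of `S` to contain exactly two points of `S`, making `|S|` even while `(p + 3) / 2` is odd.

Lower bound: view `(x, y)` as `x + iy` and take the squares `z²` of the points of the unit circle.
They are pairwise at integral distance because `|z² - w²| = |z - w| |z + w| = 2 |z × w|` on the
circle, no line meets the circle three times, and squaring is two-to-one on the `p + 1` points of
the circle. -/

open Finset

section NegOneNotSquare
variable {F : Type*} [Field F]

lemma two_ne_zero_of_not_isSquare_neg_one (h : ¬IsSquare (-1 : F)) : (2 : F) ≠ 0 := by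
  intro h2
  exact h ⟨1, by linear_combination -h2⟩

lemma eq_zero_of_sq_add_sq_eq_zero (h : ¬IsSquare (-1 : F)) {x y : F} (hxy : x ^ 2 + y ^ 2 = 0) :
    x = 0 ∧ y = 0 := by
  have hy : y = 0 := by
    by_contra hy
    exact h ⟨x / y, by field_simp; linear_combination -hxy⟩
  subst hy
  exact ⟨pow_eq_zero_iff two_ne_zero |>.mp (by linear_combination hxy), rfl⟩

lemma one_add_sq_ne_zero (h : ¬IsSquare (-1 : F)) (t : F) : 1 + t ^ 2 ≠ 0 :=
  fun ht ↦ one_ne_zero (eq_zero_of_sq_add_sq_eq_zero h (x := 1) (y := t) (by simpa using ht)).1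

/-- `1 + m²` is a square exactly when `m = (u - u⁻¹) / 2` with `u ≠ 0`, and `u`, `-u⁻¹` give
the same `m`. -/
lemma two_mul_card_filter_isSquare_one_add_sq_le [Fintype F] [DecidableEq F]
    (h : ¬IsSquare (-1 : F)) :
    2 * #{m : F | IsSquare (1 + m ^ 2)} ≤ Fintype.card F - 1 := by
  have h2 := two_ne_zero_of_not_isSquare_neg_one h
  rw [← card_univ, ← card_erase_of_mem (mem_univ (0 : F))]
  refine mul_card_image_le_card_of_maps_to (f := fun u : F ↦ (u - u⁻¹) / 2) ?_ 2 ?_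
  · intro u hu
    have hu : u ≠ 0 := ne_of_mem_erase hu
    refine mem_filter.mpr ⟨mem_univ _, (u + u⁻¹) / 2, ?_⟩
    field_simp
    ring
  · intro m hm
    obtain ⟨d, hd⟩ := (mem_filter.mp hm).2
    have hmul : (d + m) * (d - m) = 1 := by linear_combination -hd
    have hu : d + m ≠ 0 := left_ne_zero_of_mul_eq_one hmul
    have hinv : (d + m)⁻¹ = d - m := inv_eq_of_mul_eq_one_right hmul
    have hne : d + m ≠ -(d + m)⁻¹ := by
      intro heq
      rw [hinv] at heq
      exact h ⟨d + m, by linear_combination -(d + m) * heq + hmul⟩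
    calc 2 = #{d + m, -(d + m)⁻¹} := (card_pair hne).symm
      _ ≤ _ := by
        refine card_le_card <| insert_subset ?_ (singleton_subset_iff.mpr ?_) <;>
          refine mem_filter.mpr ⟨mem_erase.mpr ⟨?_, mem_univ _⟩, ?_⟩
        · exact hu
        · rw [hinv]; field_simp; ring
        · simpa using hu
        · rw [inv_neg, inv_inv, hinv]; field_simp; ring

end NegOneNotSquare

lemma not_isSquare_neg_one_of_mod_four_eq_three {p : ℕ} [Fact p.Prime] (hp4 : p % 4 = 3) :
    ¬IsSquare (-1 : ZMod p) :=
  ZMod.exists_sq_eq_neg_one_iff.not.mpr (not_not.mpr hp4)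

lemma collinear3_of_fst_eq (n : ℕ) {x y z : ZMod n × ZMod n} (hy : y.1 = x.1) (hz : z.1 = x.1) :
    Collinear3 n x y z :=
  ⟨x.1, 0, 0, 1, x.2, y.2, z.2, by simp, by simp, by simp [hy], by simp, by simp [hz], by simp⟩

lemma card_filter_fst_eq_le_two {n : ℕ} {S : Finset (ZMod n × ZMod n)}
    (hS : SemiGeneralPosition n S) (c : ZMod n) : #{y ∈ S | y.1 = c} ≤ 2 := by
  by_contra! h
  obtain ⟨x, hx, y, hy, z, hz, hxy, hxz, hyz⟩ := two_lt_card.mp h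
  simp only [mem_filter] at hx hy hz
  exact hS x hx.1 y hy.1 z hz.1 hxy hxz hyz
    (collinear3_of_fst_eq n (hy.2.trans hx.2.symm) (hz.2.trans hx.2.symm))

section Upper
variable {p : ℕ} [Fact p.Prime]

lemma collinear3_of_slope_eq {x y z : ZMod p × ZMod p} (hy : y.1 ≠ x.1) (hz : z.1 ≠ x.1)
    (h : (y.2 - x.2) / (y.1 - x.1) = (z.2 - x.2) / (z.1 - x.1)) : Collinear3 p x y z := by
  have hy' : y.1 - x.1 ≠ 0 := sub_ne_zero.mpr hy
  have hz' : z.1 - x.1 ≠ 0 := sub_ne_zero.mpr hz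
  refine ⟨x.1, x.2, 1, (y.2 - x.2) / (y.1 - x.1), 0, y.1 - x.1, z.1 - x.1,
    by ring, by ring, by ring, ?_, by ring, ?_⟩
  · field_simp; ring
  · rw [h]; field_simp; ring

lemma isSquare_one_add_slope_sq {x y : ZMod p × ZMod p} (hxy : y.1 ≠ x.1)
    (h : IntegralDistance2 p x y) : IsSquare (1 + ((y.2 - x.2) / (y.1 - x.1)) ^ 2) := by
  obtain ⟨d, hd⟩ := h
  have hxy' : y.1 - x.1 ≠ 0 := sub_ne_zero.mpr hxy
  exact ⟨d / (y.1 - x.1), by field_simp; linear_combination hd⟩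

variable {S : Finset (ZMod p × ZMod p)}

lemma two_mul_card_filter_fst_ne_le (hsq : ¬IsSquare (-1 : ZMod p))
    (hint : ∀ u ∈ S, ∀ v ∈ S, IntegralDistance2 p u v) (hS : SemiGeneralPosition p S)
    {x : ZMod p × ZMod p} (hx : x ∈ S) :
    2 * #{y ∈ S | y.1 ≠ x.1} ≤ p - 1 := by
  have hslopes : #{y ∈ S | y.1 ≠ x.1} ≤ #{m : ZMod p | IsSquare (1 + m ^ 2)} := by
    refine card_le_card_of_injOn (fun y ↦ (y.2 - x.2) / (y.1 - x.1)) ?_ ?_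
    · intro y hy
      have hy := mem_filter.mp hy
      exact mem_filter.mpr ⟨mem_univ _, isSquare_one_add_slope_sq hy.2 (hint x hx y hy.1)⟩
    · intro y hy z hz hyz
      by_contra hne
      have hy := mem_filter.mp hy
      have hz := mem_filter.mp hz
      exact hS x hx y hy.1 z hz.1 (ne_of_apply_ne Prod.fst hy.2.symm)
        (ne_of_apply_ne Prod.fst hz.2.symm) hne
        (collinear3_of_slope_eq hy.2 hz.2 hyz)
  have := two_mul_card_filter_isSquare_one_add_sq_le hsq
  rw [ZMod.card] at this
  omega

theorem card_le_of_integralDistance2_of_semiGeneralPosition (hp4 : p % 4 = 3)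
    (hint : ∀ u ∈ S, ∀ v ∈ S, IntegralDistance2 p u v) (hS : SemiGeneralPosition p S) :
    #S ≤ (p + 1) / 2 := by
  obtain rfl | ⟨x, hx⟩ := S.eq_empty_or_nonempty
  · simp
  have hsplit (x : ZMod p × ZMod p) : #{y ∈ S | y.1 = x.1} + #{y ∈ S | y.1 ≠ x.1} = #S :=
    card_filter_add_card_filter_not _
  have hsq := not_isSquare_neg_one_of_mod_four_eq_three hp4
  by_cases hlonely : ∃ x ∈ S, #{y ∈ S | y.1 = x.1} ≤ 1
  · obtain ⟨x, hx, h1⟩ := hlonely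
    have := two_mul_card_filter_fst_ne_le hsq hint hS hx
    have := hsplit x
    omega
  push Not at hlonely
  have heven : Even #S := by
    rw [card_eq_sum_card_image Prod.fst S, sum_const_nat (m := 2)]
    · exact even_two.mul_left _
    intro c hc
    obtain ⟨y, hy, rfl⟩ := mem_image.mp hc
    exact le_antisymm (card_filter_fst_eq_le_two hS _) (hlonely y hy)
  have := two_mul_card_filter_fst_ne_le hsq hint hS hx
  have := card_filter_fst_eq_le_two hS x.1
  have := hsplit x
  obtain ⟨r, hr⟩ := heven
  omega

end Upper

section ComplexSq
variable {R : Type*} [CommRing R]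

/-- `(x, y) ↦ (x + iy)²`. -/
def complexSq (z : R × R) : R × R := (z.1 ^ 2 - z.2 ^ 2, 2 * z.1 * z.2)

lemma complexSq_on_circle {z : R × R} (hz : z.1 ^ 2 + z.2 ^ 2 = 1) :
    (complexSq z).1 ^ 2 + (complexSq z).2 ^ 2 = 1 := by
  simp only [complexSq]
  linear_combination (z.1 ^ 2 + z.2 ^ 2 + 1) * hz

/-- For unit vectors, `|z² - w²|² = |z - w|² |z + w|² = 4 (z × w)²`. -/
lemma integralDistance2_complexSq (n : ℕ) {z w : ZMod n × ZMod n}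
    (hz : z.1 ^ 2 + z.2 ^ 2 = 1) (hw : w.1 ^ 2 + w.2 ^ 2 = 1) :
    IntegralDistance2 n (complexSq z) (complexSq w) := by
  refine ⟨2 * (z.1 * w.2 - z.2 * w.1), ?_⟩
  simp only [complexSq]
  linear_combination (z.1 ^ 2 + z.2 ^ 2 - w.1 ^ 2 - w.2 ^ 2) * hz -
    (z.1 ^ 2 + z.2 ^ 2 - w.1 ^ 2 - w.2 ^ 2) * hw

end ComplexSq

section CircleField
variable {F : Type*} [Field F]

lemma eq_or_eq_neg_of_complexSq_eq (h : ¬IsSquare (-1 : F)) {z w : F × F}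
    (hzw : complexSq z = complexSq w) : w = z ∨ w = -z := by
  have h1 : z.1 ^ 2 - z.2 ^ 2 = w.1 ^ 2 - w.2 ^ 2 := congrArg Prod.fst hzw
  have h2 : 2 * z.1 * z.2 = 2 * w.1 * w.2 := congrArg Prod.snd hzw
  have key : ((z.1 - w.1) ^ 2 + (z.2 - w.2) ^ 2) * ((z.1 + w.1) ^ 2 + (z.2 + w.2) ^ 2) = 0 := by
    linear_combination (z.1 ^ 2 - z.2 ^ 2 - w.1 ^ 2 + w.2 ^ 2) * h1 +
      (2 * z.1 * z.2 - 2 * w.1 * w.2) * h2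
  rcases mul_eq_zero.mp key with h0 | h0
  · obtain ⟨e1, e2⟩ := eq_zero_of_sq_add_sq_eq_zero h h0
    exact Or.inl (Prod.ext (by linear_combination -e1) (by linear_combination -e2))
  · obtain ⟨e1, e2⟩ := eq_zero_of_sq_add_sq_eq_zero h h0
    exact Or.inr (Prod.ext (by simp; linear_combination e1) (by simp; linear_combination e2))

/-- The rational parametrization of the unit circle from the point `(-1, 0)`. -/
def circleParam (t : F) : F × F := ((1 - t ^ 2) / (1 + t ^ 2), 2 * t / (1 + t ^ 2))

lemma circleParam_on_circle (h : ¬IsSquare (-1 : F)) (t : F) :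
    (circleParam t).1 ^ 2 + (circleParam t).2 ^ 2 = 1 := by
  have := one_add_sq_ne_zero h t
  simp only [circleParam]
  field_simp
  ring

lemma circleParam_injective (h : ¬IsSquare (-1 : F)) :
    Function.Injective (circleParam (F := F)) := by
  refine Function.LeftInverse.injective (g := fun z ↦ z.2 / (1 + z.1)) fun t ↦ ?_
  have := one_add_sq_ne_zero h t
  have h2 := two_ne_zero_of_not_isSquare_neg_one h
  simp only [circleParam]
  field_simp
  rw [show 1 + t ^ 2 + (1 - t ^ 2) = (2 : F) by ring, mul_div_cancel_left₀ t h2]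

end CircleField

/-- Three distinct points of a line are three distinct roots of a quadratic equation on the
circle, whose leading coefficient `t₁² + t₂²` cannot vanish. -/
lemma not_collinear3_of_on_circle {p : ℕ} [Fact p.Prime] (h : ¬IsSquare (-1 : ZMod p))
    {x y z : ZMod p × ZMod p} (hx : x.1 ^ 2 + x.2 ^ 2 = 1) (hy : y.1 ^ 2 + y.2 ^ 2 = 1)
    (hz : z.1 ^ 2 + z.2 ^ 2 = 1) (hxy : x ≠ y) (hxz : x ≠ z) (hyz : y ≠ z) :
    ¬Collinear3 p x y z := by
  rintro ⟨a, b, t₁, t₂, w₁, w₂, w₃, hx1, hx2, hy1, hy2, hz1, hz2⟩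
  rw [hx1, hx2] at hx
  rw [hy1, hy2] at hy
  rw [hz1, hz2] at hz
  have hA : t₁ ^ 2 + t₂ ^ 2 ≠ 0 := by
    intro hA
    obtain ⟨rfl, rfl⟩ := eq_zero_of_sq_add_sq_eq_zero h hA
    exact hxy (Prod.ext (by simp [hx1, hy1]) (by simp [hx2, hy2]))
  have hroots (u v : ZMod p) (huv : u ≠ v) (hu : (a + u * t₁) ^ 2 + (b + u * t₂) ^ 2 = 1)
      (hv : (a + v * t₁) ^ 2 + (b + v * t₂) ^ 2 = 1) :
      (t₁ ^ 2 + t₂ ^ 2) * (u + v) + 2 * (a * t₁ + b * t₂) = 0 := by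
    have : (u - v) * ((t₁ ^ 2 + t₂ ^ 2) * (u + v) + 2 * (a * t₁ + b * t₂)) = 0 := by
      linear_combination hu - hv
    exact (mul_eq_zero.mp this).resolve_left (sub_ne_zero.mpr huv)
  have h12 : w₁ ≠ w₂ := fun e ↦ hxy (Prod.ext (by rw [hx1, hy1, e]) (by rw [hx2, hy2, e]))
  have h13 : w₁ ≠ w₃ := fun e ↦ hxz (Prod.ext (by rw [hx1, hz1, e]) (by rw [hx2, hz2, e]))
  have h23 : (t₁ ^ 2 + t₂ ^ 2) * (w₂ - w₃) = 0 := by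
    linear_combination hroots w₁ w₂ h12 hx hy - hroots w₁ w₃ h13 hx hz
  have e : w₂ = w₃ := sub_eq_zero.mp ((mul_eq_zero.mp h23).resolve_left hA)
  exact hyz (Prod.ext (by rw [hy1, hz1, e]) (by rw [hy2, hz2, e]))

section SquaredCircle
variable (F : Type*) [Field F] [Fintype F] [DecidableEq F]

def squaredCircle : Finset (F × F) := (univ.image circleParam).image complexSq

variable {F}

lemma exists_eq_complexSq_of_mem_squaredCircle (h : ¬IsSquare (-1 : F)) {u : F × F}
    (hu : u ∈ squaredCircle F) : ∃ z : F × F, z.1 ^ 2 + z.2 ^ 2 = 1 ∧ complexSq z = u := by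
  obtain ⟨z, hz, rfl⟩ := mem_image.mp hu
  obtain ⟨t, -, rfl⟩ := mem_image.mp hz
  exact ⟨_, circleParam_on_circle h t, rfl⟩

lemma card_le_two_mul_card_squaredCircle (h : ¬IsSquare (-1 : F)) :
    Fintype.card F ≤ 2 * #(squaredCircle F) := by
  rw [← card_univ, ← card_image_of_injective _ (circleParam_injective h)]
  refine card_le_mul_card_image _ 2 fun u hu ↦ ?_
  obtain ⟨z, -, rfl⟩ := mem_image.mp hu
  calc #{w ∈ univ.image circleParam | complexSq w = complexSq z}
      ≤ #{z, -z} := card_le_card fun w hw ↦ by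
        simpa using eq_or_eq_neg_of_complexSq_eq h (mem_filter.mp hw).2.symm
    _ ≤ 2 := card_le_two

end SquaredCircle

section ZModPrime
variable {p : ℕ} [Fact p.Prime]

lemma integralDistance2_squaredCircle (h : ¬IsSquare (-1 : ZMod p)) :
    ∀ u ∈ squaredCircle (ZMod p), ∀ v ∈ squaredCircle (ZMod p), IntegralDistance2 p u v := by
  intro u hu v hv
  obtain ⟨z, hz, rfl⟩ := exists_eq_complexSq_of_mem_squaredCircle h hu
  obtain ⟨w, hw, rfl⟩ := exists_eq_complexSq_of_mem_squaredCircle h hv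
  exact integralDistance2_complexSq p hz hw

lemma semiGeneralPosition_squaredCircle (h : ¬IsSquare (-1 : ZMod p)) :
    SemiGeneralPosition p (squaredCircle (ZMod p)) := by
  have hcircle {u} (hu : u ∈ squaredCircle (ZMod p)) : u.1 ^ 2 + u.2 ^ 2 = 1 := by
    obtain ⟨z, hz, rfl⟩ := exists_eq_complexSq_of_mem_squaredCircle h hu
    exact complexSq_on_circle hz
  intro x hx y hy z hz
  exact not_collinear3_of_on_circle h (hcircle hx) (hcircle hy) (hcircle hz)

end ZModPrime

theorem maxIntegralCardSGP_of_three_mod_four (p : ℕ) (hp : p.Prime)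
    (hp4 : p % 4 = 3) :
    maxIntegralCardSGP p = (p + 1) / 2 := by
  have : Fact p.Prime := ⟨hp⟩
  have hsq := not_isSquare_neg_one_of_mod_four_eq_three hp4
  have hint := integralDistance2_squaredCircle hsq
  have hS := semiGeneralPosition_squaredCircle hsq
  have hcard := card_le_two_mul_card_squaredCircle hsq
  have hmax := card_le_of_integralDistance2_of_semiGeneralPosition hp4 hint hS
  rw [ZMod.card] at hcard
  refine IsGreatest.csSup_eq ⟨⟨_, hint, hS, by omega⟩, ?_⟩
  rintro k ⟨S, hint, hS, rfl⟩
  exact card_le_of_integralDistance2_of_semiGeneralPosition hp4 hint hS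
end

section
/- Let p be an odd prime, m a positive integer, and let δ_{i,j} ∈ ℤ/pℤ (1 ≤ i,j ≤ r) be symmetric with δ_{i,i} = 0 and δ_{i,j} ≠ 0 for i ≠ j, such that for every index subset {i_1,…,i_t} of cardinality t = m+2 and of cardinality t = m+3 the Cayley–Menger determinant V²_{t−1}({i_1,…,i_t}) vanishes (so that δ is an integral point set over E_p^m in the coordinate-free sense). Then for any two index subsets T₁, T₂ of cardinality m+1 with V²_m(T₁) ≠ 0 and V²_m(T₂) ≠ 0, the product V²_m(T₁) · V²_m(T₂) is a nonzero square in ℤ/pℤ; that is, every non-degenerate simplex of the point set has the same characteristic. -/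
/-- The Cayley–Menger determinant `V²_{t-1}` of the `t` points with indices
`f 0, …, f (t-1)`, for a distance matrix `δ`: the determinant of the
`(t+1) × (t+1)` matrix whose upper-left `t × t` block has `(k,l)` entry
`δ (f k) (f l) ^ 2`, and whose last row and column consist of ones, except
the bottom-right entry, which is `0`. -/
def cayleyMenger {R : Type*} [CommRing R] {r : ℕ} (δ : Fin r → Fin r → R)
    {t : ℕ} (f : Fin t → Fin r) : R :=
  Matrix.det (Matrix.of fun i j : Fin (t + 1) =>
    if hi : (i : ℕ) < t then
      if hj : (j : ℕ) < t then δ (f ⟨i, hi⟩) (f ⟨j, hj⟩) ^ 2 else 1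
    else
      if (j : ℕ) < t then 1 else 0)

/-!
Bordering the matrix of squared distances with a row and a column of ones turns every
Cayley–Menger determinant into a principal minor of one symmetric matrix `B`, and a
non-degenerate simplex `T₁` into an invertible principal block `A = B[F, F]`. The vanishing of
the bordered minors with one or two extra points says that the Schur complement
`B - B[·, F] A⁻¹ B[F, ·]` has vanishing `1 × 1` and `2 × 2` principal minors; being symmetric,
it is zero. Hence `B[G, G] = B[G, F] A⁻¹ B[F, G]` for any other simplex `T₂`, and
`det A · det B[G, G] = (det B[G, F])²`.
-/

open Matrix Function

section SchurComplement

variable {K ι n : Type*} [Field K] [Fintype n] [DecidableEq n]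

noncomputable def schurComplement (B : Matrix ι ι K) (F : n → ι) : Matrix ι ι K :=
  B - B.submatrix id F * (B.submatrix F F)⁻¹ * B.submatrix F id

variable (B : Matrix ι ι K) (F : n → ι)

lemma submatrix_schurComplement {m m' : Type*} (v : m → ι) (w : m' → ι) :
    (schurComplement B F).submatrix v w =
      B.submatrix v w - B.submatrix v F * (B.submatrix F F)⁻¹ * B.submatrix F w := by
  ext i j
  simp [schurComplement, Matrix.mul_apply]

lemma schurComplement_transpose (hB : Bᵀ = B) :
    (schurComplement B F)ᵀ = schurComplement B F := by
  rw [schurComplement, transpose_sub, transpose_mul, transpose_mul, transpose_nonsing_inv,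
    transpose_submatrix, transpose_submatrix, transpose_submatrix, hB, Matrix.mul_assoc]

lemma schurComplement_apply_right (hA : (B.submatrix F F).det ≠ 0) (a : ι) (l : n) :
    schurComplement B F a (F l) = 0 := by
  have h : (schurComplement B F).submatrix id F = 0 := by
    rw [submatrix_schurComplement, Matrix.mul_assoc,
      nonsing_inv_mul _ (isUnit_iff_ne_zero.mpr hA), Matrix.mul_one, sub_self]
  exact congrFun (congrFun h a) l

lemma det_submatrix_sumElim {m : Type*} [Fintype m] [DecidableEq m]
    (hA : (B.submatrix F F).det ≠ 0) (v : m → ι) :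
    (B.submatrix (Sum.elim F v) (Sum.elim F v)).det =
      (B.submatrix F F).det * ((schurComplement B F).submatrix v v).det := by
  let _ := invertibleOfIsUnitDet _ (isUnit_iff_ne_zero.mpr hA)
  have hblocks : B.submatrix (Sum.elim F v) (Sum.elim F v) =
      fromBlocks (B.submatrix F F) (B.submatrix F v) (B.submatrix v F) (B.submatrix v v) := by
    ext (i | i) (j | j) <;> rfl
  rw [hblocks, det_fromBlocks₁₁, invOf_eq_nonsing_inv, submatrix_schurComplement]

lemma schurComplement_eq_zero (hB : Bᵀ = B) (hA : (B.submatrix F F).det ≠ 0)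
    (h1 : ∀ v : Fin 1 → ι, (∀ i, v i ∉ Set.range F) →
      (B.submatrix (Sum.elim F v) (Sum.elim F v)).det = 0)
    (h2 : ∀ v : Fin 2 → ι, Injective v → (∀ i, v i ∉ Set.range F) →
      (B.submatrix (Sum.elim F v) (Sum.elim F v)).det = 0) :
    schurComplement B F = 0 := by
  have hS : ∀ a b, schurComplement B F b a = schurComplement B F a b := fun a b =>
    congrFun (congrFun (schurComplement_transpose B F hB) a) b
  have hdiag : ∀ c ∉ Set.range F, schurComplement B F c c = 0 := by
    intro c hc
    have h := h1 ![c] (by simpa using hc)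
    rw [det_submatrix_sumElim B F hA, det_fin_one] at h
    simpa [hA] using h
  ext a b
  rw [Matrix.zero_apply]
  by_cases hb : b ∈ Set.range F
  · obtain ⟨l, rfl⟩ := hb
    exact schurComplement_apply_right B F hA a l
  by_cases ha : a ∈ Set.range F
  · obtain ⟨k, rfl⟩ := ha
    rw [← hS]
    exact schurComplement_apply_right B F hA b k
  by_cases hab : a = b
  · subst hab
    exact hdiag a ha
  have h := h2 ![a, b] (injective_pair_iff_ne.mpr hab) (Fin.forall_fin_two.mpr ⟨ha, hb⟩)
  rw [det_submatrix_sumElim B F hA, det_fin_two] at h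
  simpa [hdiag a ha, hdiag b hb, hS a b, hA] using h

theorem det_submatrix_mul_det_submatrix_eq_sq (hB : Bᵀ = B) (hA : (B.submatrix F F).det ≠ 0)
    (h1 : ∀ v : Fin 1 → ι, (∀ i, v i ∉ Set.range F) →
      (B.submatrix (Sum.elim F v) (Sum.elim F v)).det = 0)
    (h2 : ∀ v : Fin 2 → ι, Injective v → (∀ i, v i ∉ Set.range F) →
      (B.submatrix (Sum.elim F v) (Sum.elim F v)).det = 0)
    (G : n → ι) :
    (B.submatrix F F).det * (B.submatrix G G).det = (B.submatrix G F).det ^ 2 := by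
  have hGG : B.submatrix G G = B.submatrix G F * (B.submatrix F F)⁻¹ * B.submatrix F G := by
    rw [← sub_eq_zero, ← submatrix_schurComplement, schurComplement_eq_zero B F hB hA h1 h2,
      submatrix_zero]
    rfl
  have hFG : (B.submatrix F G).det = (B.submatrix G F).det := by
    rw [← det_transpose, transpose_submatrix, hB]
  rw [hGG, det_mul, det_mul, det_nonsing_inv, hFG, Ring.inverse_eq_inv']
  field_simp

end SchurComplement

section CayleyMenger

variable {R : Type*} [CommRing R] {r : ℕ} (δ : Fin r → Fin r → R)

def cayleyMengerMatrix : Matrix (Fin r ⊕ Fin 1) (Fin r ⊕ Fin 1) R :=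
  fromBlocks (of fun i j => δ i j ^ 2) (of fun _ _ => 1) (of fun _ _ => 1) 0

lemma cayleyMengerMatrix_transpose (hsymm : ∀ i j, δ i j = δ j i) :
    (cayleyMengerMatrix δ)ᵀ = cayleyMengerMatrix δ := by
  rw [cayleyMengerMatrix, fromBlocks_transpose]
  congr 1
  ext i j
  simp [hsymm j i]

lemma cayleyMenger_eq_det_submatrix {t : ℕ} (f : Fin t → Fin r) :
    cayleyMenger δ f =
      ((cayleyMengerMatrix δ).submatrix (Sum.map f id) (Sum.map f id)).det := by
  rw [cayleyMenger, ← det_submatrix_equiv_self finSumFinEquiv]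
  congr 1
  ext (k | k) (l | l) <;> simp [cayleyMengerMatrix]

lemma cayleyMenger_append {t q : ℕ} (f : Fin t → Fin r) (w : Fin q → Fin r) :
    cayleyMenger δ (Sum.elim f w ∘ finSumFinEquiv.symm) =
      ((cayleyMengerMatrix δ).submatrix (Sum.elim (Sum.map f id) (Sum.inl ∘ w))
        (Sum.elim (Sum.map f id) (Sum.inl ∘ w))).det := by
  let e : (Fin t ⊕ Fin 1) ⊕ Fin q ≃ Fin (t + q) ⊕ Fin 1 :=
    (Equiv.sumAssoc _ _ _).trans <| ((Equiv.refl _).sumCongr (Equiv.sumComm _ _)).trans <|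
      (Equiv.sumAssoc _ _ _).symm.trans (finSumFinEquiv.sumCongr (Equiv.refl _))
  have he : Sum.map (Sum.elim f w ∘ finSumFinEquiv.symm) id ∘ e =
      Sum.elim (Sum.map f id) (Sum.inl ∘ w) := by
    funext x
    rcases x with (k | k) | k <;> simp [e]
  rw [cayleyMenger_eq_det_submatrix, ← det_submatrix_equiv_self e, submatrix_submatrix, he]

lemma det_submatrix_append_eq_zero {t q : ℕ}
    (hCM : ∀ g : Fin (t + q) → Fin r, Injective g → cayleyMenger δ g = 0)
    {f : Fin t → Fin r} (hf : Injective f) (v : Fin q → Fin r ⊕ Fin 1) (hv : Injective v)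
    (hvf : ∀ i, v i ∉ Set.range (Sum.map f id)) :
    ((cayleyMengerMatrix δ).submatrix (Sum.elim (Sum.map f id) v)
      (Sum.elim (Sum.map f id) v)).det = 0 := by
  have hleft : ∀ i, ∃ a, v i = Sum.inl a := by
    intro i
    rcases hi : v i with a | u
    · exact ⟨a, rfl⟩
    · exact absurd ⟨Sum.inr u, hi.symm⟩ (hvf i)
  choose w hw using hleft
  obtain rfl : v = Sum.inl ∘ w := funext hw
  have hfw : ∀ k l, f k ≠ w l := fun k l hkl => hvf l ⟨Sum.inl k, by simp [hkl]⟩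
  rw [← cayleyMenger_append]
  exact hCM _ ((hf.sumElim hv.of_comp hfw).comp finSumFinEquiv.symm.injective)

end CayleyMenger

theorem same_characteristic_general (p m r : ℕ) (hp : p.Prime)
    (δ : Fin r → Fin r → ZMod p)
    (hsymm : ∀ i j, δ i j = δ j i)
    (hCM2 : ∀ f : Fin (m + 2) → Fin r, Function.Injective f →
      cayleyMenger δ f = 0)
    (hCM3 : ∀ f : Fin (m + 3) → Fin r, Function.Injective f →
      cayleyMenger δ f = 0) :
    ∀ f g : Fin (m + 1) → Fin r, Function.Injective f → Function.Injective g →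
      cayleyMenger δ f ≠ 0 → cayleyMenger δ g ≠ 0 →
        ∃ s : ZMod p, s ≠ 0 ∧ cayleyMenger δ f * cayleyMenger δ g = s ^ 2 := by
  intro f g hf _ hf0 hg0
  have : Fact p.Prime := ⟨hp⟩
  simp only [cayleyMenger_eq_det_submatrix] at hf0 hg0 ⊢
  have key := det_submatrix_mul_det_submatrix_eq_sq _ _ (cayleyMengerMatrix_transpose δ hsymm) hf0
    (fun v => det_submatrix_append_eq_zero δ (q := 1) hCM2 hf v (injective_of_subsingleton v))
    (det_submatrix_append_eq_zero δ (q := 2) hCM3 hf) (Sum.map g id)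
  exact ⟨_, fun hs => mul_ne_zero hf0 hg0 (by rw [key, hs, zero_pow two_ne_zero]), key⟩

theorem same_characteristic (p m r : ℕ) (hp : p.Prime) (hodd : p ≠ 2)
    (hm : 0 < m) (δ : Fin r → Fin r → ZMod p)
    (hsymm : ∀ i j, δ i j = δ j i)
    (hdiag : ∀ i, δ i i = 0)
    (hne : ∀ i j, i ≠ j → δ i j ≠ 0)
    (hCM2 : ∀ f : Fin (m + 2) → Fin r, Function.Injective f →
      cayleyMenger δ f = 0)
    (hCM3 : ∀ f : Fin (m + 3) → Fin r, Function.Injective f →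
      cayleyMenger δ f = 0) :
    ∀ f g : Fin (m + 1) → Fin r, Function.Injective f → Function.Injective g →
      cayleyMenger δ f ≠ 0 → cayleyMenger δ g ≠ 0 →
        ∃ s : ZMod p, s ≠ 0 ∧ cayleyMenger δ f * cayleyMenger δ g = s ^ 2 :=
  same_characteristic_general p m r hp δ hsymm hCM2 hCM3
end
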